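/- arXiv:1608.03397 — 12 statements merged into one kernel-verified Lean document; each statement's English description precedes it below -/
import Mathlib

section
/- (Proposition 2, lower bound) Let Q1 : [0,1] → ℝ be nondecreasing with Q1(0) ≥ 0, let θ0 > 0 and c_H > 0, and set Q(x,1) = Q1(x) + Q1(1−x). Then for every x ∈ [0,1], the no-incentive equilibrium welfare satisfies θ0·Q(0,1) ≥ (1/2)·(θ0·Q(x,1) − x·c_H); i.e., the price of anarchy of the content routing game without incentive design is at least 1/2. -/
/-! Since `Q1` is nondecreasing, both shares of the content are at most `Q1 1`, so the content
of any split is at most twice `Q1 1 ≤ Q(0,1)`; dropping the nonnegative travel cost then bounds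
the optimal welfare by twice the equilibrium welfare. -/

/-- The total content `Q(x,1)` when a fraction `x` of the users takes the high-cost path. -/
def totalContent (Q1 : ℝ → ℝ) (x : ℝ) : ℝ := Q1 x + Q1 (1 - x)

theorem totalContent_le_two_mul_totalContent_zero {Q1 : ℝ → ℝ}
    (hmono : MonotoneOn Q1 (Set.Icc 0 1)) (h0 : 0 ≤ Q1 0) {x : ℝ} (hx : x ∈ Set.Icc (0 : ℝ) 1) :
    totalContent Q1 x ≤ 2 * totalContent Q1 0 := by
  have hone : (1 : ℝ) ∈ Set.Icc (0 : ℝ) 1 := Set.right_mem_Icc.mpr zero_le_one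
  have hx' : 1 - x ∈ Set.Icc (0 : ℝ) 1 := ⟨by linarith [hx.2], by linarith [hx.1]⟩
  have h1 : Q1 x ≤ Q1 1 := hmono hx hone hx.2
  have h2 : Q1 (1 - x) ≤ Q1 1 := hmono hx' hone hx'.2
  simp only [totalContent, sub_zero]
  linarith

/-- Proposition 2, lower bound: For `Q1` nondecreasing on `[0,1]`
with `Q1(0) ≥ 0`, `θ0 > 0`, `c_H > 0` and `Q(x) = Q1(x) + Q1(1−x)`, the
no-incentive equilibrium welfare satisfies
`θ0·Q(0) ≥ (1/2)·(θ0·Q(x) − x·c_H)` for every `x ∈ [0,1]`;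
i.e. the price of anarchy without incentive design is at least `1/2`. -/
theorem stmt_3 (Q1 : ℝ → ℝ) (hmono : MonotoneOn Q1 (Set.Icc 0 1)) (h0 : 0 ≤ Q1 0)
    (θ0 cH : ℝ) (hθ : 0 < θ0) (hc : 0 < cH) :
    ∀ x ∈ Set.Icc (0 : ℝ) 1,
      (1 / 2) * (θ0 * (Q1 x + Q1 (1 - x)) - x * cH) ≤ θ0 * (Q1 0 + Q1 (1 - 0)) := by
  intro x hx
  calc (1 / 2) * (θ0 * (Q1 x + Q1 (1 - x)) - x * cH)
      ≤ (1 / 2) * (θ0 * totalContent Q1 x) := by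
        have hcost : 0 ≤ x * cH := mul_nonneg hx.1 hc.le
        rw [totalContent]
        linarith
    _ ≤ (1 / 2) * (θ0 * (2 * totalContent Q1 0)) := by
        gcongr
        exact totalContent_le_two_mul_totalContent_zero hmono h0 hx
    _ = θ0 * (Q1 0 + Q1 (1 - 0)) := by
        rw [totalContent]
        ring
end

section
/- (Proposition 2, tightness) Let q > 0, θ0 > 0, and define Q1(x) = 2qx for x ∈ [0,1/2] and Q1(x) = q for x ∈ [1/2,1], with Q(x,1) = Q1(x) + Q1(1−x). Then for every c_H ∈ (0, 2θ0 q): (i) sup over x ∈ [0,1] of SW(x) = θ0·Q(x,1) − x·c_H equals 2θ0 q − c_H/2, attained at x = 1/2; (ii) the no-incentive equilibrium welfare is SW(0) = θ0 q; and (iii) the infimum over c_H ∈ (0, 2θ0 q) of the ratio θ0 q / (2θ0 q − c_H/2) equals 1/2. Hence the price of anarchy without incentive design equals exactly 1/2. -/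
/-!
The total content is `Q x = q + 2q·min(x, 1 - x)`, so for `c_H < 2θ0 q` the welfare is a tent
peaking at `x = 1/2`. The ratio `θ0 q / (2θ0 q - c_H/2)` sweeps out exactly `(1/2, 1)` as `c_H`
ranges over `(0, 2θ0 q)`, whose infimum is `1/2`.
-/

open Set

/-- The paper's `Q1`. -/
noncomputable def rampThenFlat (q x : ℝ) : ℝ := if x ≤ 1 / 2 then 2 * q * x else q

lemma rampThenFlat_add_rampThenFlat_one_sub (q x : ℝ) :
    rampThenFlat q x + rampThenFlat q (1 - x) = q + 2 * q * min x (1 - x) := by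
  unfold rampThenFlat
  rcases le_or_gt x (1 / 2) with hx | hx
  · rw [min_eq_left (by linarith), if_pos hx]
    rcases eq_or_lt_of_le hx with rfl | hx'
    · norm_num; ring
    · rw [if_neg (by linarith)]; ring
  · rw [min_eq_right (by linarith), if_neg (by linarith), if_pos (by linarith)]

/-- Piecewise linear with its kink at `x = 1/2`: increasing before it since `c ≤ 2p`,
decreasing after it since `-2p ≤ c`. -/
lemma add_two_mul_min_sub_mul_le {p c : ℝ} (hc : |c| ≤ 2 * p) (x : ℝ) :
    p + 2 * p * min x (1 - x) - x * c ≤ 2 * p - c / 2 := by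
  obtain ⟨hc_lower, hc_upper⟩ := abs_le.mp hc
  rcases le_total x (1 / 2) with hx | hx
  · rw [min_eq_left (by linarith)]
    nlinarith
  · rw [min_eq_right (by linarith)]
    nlinarith

/-- The preimage of `w` is `c = 4p - 2p/w`. -/
lemma setOf_div_two_mul_sub_half_eq_Ioo {p : ℝ} (hp : 0 < p) :
    {w : ℝ | ∃ c ∈ Ioo 0 (2 * p), w = p / (2 * p - c / 2)} = Ioo (1 / 2) 1 := by
  ext w
  constructor
  · rintro ⟨c, ⟨hc0, hc2⟩, rfl⟩
    have hden : 0 < 2 * p - c / 2 := by linarith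
    constructor
    · rw [lt_div_iff₀ hden]; linarith
    · rw [div_lt_one hden]; linarith
  · rintro ⟨hw_lower, hw_upper⟩
    have hw : 0 < w := by linarith
    refine ⟨4 * p - 2 * p / w, ⟨?_, ?_⟩, ?_⟩
    · rw [sub_pos, div_lt_iff₀ hw]; nlinarith
    · rw [sub_lt_iff_lt_add, ← sub_lt_iff_lt_add', lt_div_iff₀ hw]; nlinarith
    · field_simp; ring

/-- Proposition 2, tightness: For `Q1(x) = 2qx` on `[0,1/2]` and
`Q1(x) = q` on `[1/2,1]`, with `Q(x) = Q1(x)+Q1(1−x)` and any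
`c_H ∈ (0, 2θ0 q)`: (i) the supremum of `SW(x) = θ0·Q(x) − x·c_H` over `[0,1]`
is `2θ0 q − c_H/2`, attained at `x = 1/2`; (ii) the no-incentive equilibrium
welfare is `SW(0) = θ0 q`; (iii) the infimum over `c_H ∈ (0,2θ0 q)` of the
ratio `θ0 q / (2θ0 q − c_H/2)` is `1/2`. Hence the PoA equals exactly `1/2`. -/
theorem stmt_4 (q θ0 : ℝ) (hq : 0 < q) (hθ : 0 < θ0) :
    let Q1 : ℝ → ℝ := fun x => if x ≤ 1 / 2 then 2 * q * x else q
    let Q : ℝ → ℝ := fun x => Q1 x + Q1 (1 - x)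
    (∀ cH ∈ Set.Ioo (0 : ℝ) (2 * θ0 * q),
      (∀ x ∈ Set.Icc (0 : ℝ) 1, θ0 * Q x - x * cH ≤ 2 * θ0 * q - cH / 2) ∧
      θ0 * Q (1 / 2) - (1 / 2) * cH = 2 * θ0 * q - cH / 2 ∧
      θ0 * Q 0 - 0 * cH = θ0 * q) ∧
    IsGLB {w : ℝ | ∃ cH ∈ Set.Ioo (0 : ℝ) (2 * θ0 * q),
        w = θ0 * q / (2 * θ0 * q - cH / 2)} (1 / 2) := by
  intro Q1 Q
  have hQ (x : ℝ) : Q x = q + 2 * q * min x (1 - x) := rampThenFlat_add_rampThenFlat_one_sub q x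
  refine ⟨fun cH ⟨hc0, hc2⟩ => ⟨fun x _ => ?_, ?_, ?_⟩, ?_⟩
  · have hc : |cH| ≤ 2 * (θ0 * q) := abs_le.mpr ⟨by linarith, by linarith⟩
    rw [hQ]
    linear_combination add_two_mul_min_sub_mul_le hc x
  · rw [hQ]; norm_num; ring
  · rw [hQ]; norm_num
  · have hp : 0 < θ0 * q := mul_pos hθ hq
    simp only [mul_assoc]
    rw [setOf_div_two_mul_sub_half_eq_Ioo hp]
    exact isGLB_Ioo (by norm_num)
end

section
/- (Proposition 3) Let b ∈ (0,1], c_H > 0, and let x̂ ∈ (0,b) be a target flow. Define the side-payment function g(x) = x̂·c_H·(b−x) / (b·(b−x̂)) for x ∈ [0,b], and let payoffs be u(L,x) = θ·Q(x,b) − g(x) and u(H,x) = θ·Q(x,b) − c_H + ((b−x)/x)·g(x) for x ∈ (0,b], where θ ∈ ℝ and Q(·,b) : [0,b] → ℝ is any function. Then: (i) u(L,x̂) = u(H,x̂) = θ·Q(x̂,b) − (x̂/b)·c_H, so x̂ is an equilibrium at which every user's total perceived cost is x̂·c_H/b regardless of path; (ii) for every x ∈ (0,x̂), u(H,x) > u(L,x);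 and (iii) for every x ∈ (x̂,b), u(L,x) > u(H,x). -/
/-!
The refund to an `H`-user plus the avoided payment `g x` totals `(b / x) · g x`, so the payoff
advantage of path `H` over path `L` at flow `x` is `(b / x) · g x − c_H`. For the affine `g`
vanishing at `b` this equals `c_H · b · (x̂ − x) / (x · (b − x̂))`, whose sign is that of `x̂ − x`.
-/

noncomputable def sidePayment (b cH xh x : ℝ) : ℝ :=
  xh * cH * (b - x) / (b * (b - xh))

lemma sidePayment_target {b cH xh : ℝ} (hxh : xh ≠ b) :
    sidePayment b cH xh xh = xh / b * cH := by
  have : b - xh ≠ 0 := sub_ne_zero.mpr hxh.symm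
  unfold sidePayment
  field_simp

lemma refund_add_sidePayment_sub_cost {b cH xh x : ℝ} (hb : b ≠ 0) (hxh : xh ≠ b)
    (hx : x ≠ 0) :
    (b - x) / x * sidePayment b cH xh x + sidePayment b cH xh x - cH
      = cH * b * (xh - x) / (x * (b - xh)) := by
  have : b - xh ≠ 0 := sub_ne_zero.mpr hxh.symm
  unfold sidePayment
  field_simp
  ring

theorem stmt_5_general (b cH xh θ : ℝ) (hc : 0 < cH)
    (hx : xh ∈ Set.Ioo 0 b) (Q : ℝ → ℝ) :
    let g : ℝ → ℝ := fun x => xh * cH * (b - x) / (b * (b - xh))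
    let uL : ℝ → ℝ := fun x => θ * Q x - g x
    let uH : ℝ → ℝ := fun x => θ * Q x - cH + ((b - x) / x) * g x
    (uL xh = θ * Q xh - (xh / b) * cH ∧ uH xh = θ * Q xh - (xh / b) * cH) ∧
    (∀ x ∈ Set.Ioo 0 xh, uL x < uH x) ∧
    (∀ x ∈ Set.Ioo xh b, uH x < uL x) := by
  obtain ⟨hxh, hxhb⟩ := hx
  have hb : 0 < b := hxh.trans hxhb
  have hbxh : 0 < b - xh := sub_pos.mpr hxhb
  intro g uL uH
  have hgap (x : ℝ) (hx : 0 < x) : uH x - uL x = cH * b * (xh - x) / (x * (b - xh)) := by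
    rw [← refund_add_sidePayment_sub_cost hb.ne' hxhb.ne hx.ne']
    simp only [uH, uL, g, sidePayment]
    ring
  have hL : uL xh = θ * Q xh - xh / b * cH := by
    show θ * Q xh - sidePayment b cH xh xh = _
    rw [sidePayment_target hxhb.ne]
  refine ⟨⟨hL, ?_⟩, fun x ⟨hx, hxxh⟩ => ?_, fun x ⟨hxhx, _⟩ => ?_⟩
  · have h0 := hgap xh hxh
    rw [sub_self, mul_zero, zero_div] at h0
    linarith
  · have : 0 < cH * b * (xh - x) / (x * (b - xh)) := by
      have := sub_pos.mpr hxxh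
      positivity
    linarith [hgap x hx]
  · have hx : 0 < x := hxh.trans hxhx
    have : cH * b * (xh - x) / (x * (b - xh)) < 0 :=
      div_neg_of_neg_of_pos
        (mul_neg_of_pos_of_neg (by positivity) (sub_neg.mpr hxhx)) (by positivity)
    linarith [hgap x hx]

/-- Proposition 3: With participation mass `b ∈ (0,1]`, target
flow `x̂ ∈ (0,b)` and side-payment `g(x) = x̂·c_H·(b−x)/(b·(b−x̂))`, the payoffs
`u(L,x) = θ·Q(x) − g(x)` and `u(H,x) = θ·Q(x) − c_H + ((b−x)/x)·g(x)` satisfy: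
(i) `u(L,x̂) = u(H,x̂) = θ·Q(x̂) − (x̂/b)·c_H`; (ii) `u(H,x) > u(L,x)` for
`x ∈ (0,x̂)`; (iii) `u(L,x) > u(H,x)` for `x ∈ (x̂,b)`. -/
theorem stmt_5 (b cH xh θ : ℝ) (hb : b ∈ Set.Ioc (0 : ℝ) 1) (hc : 0 < cH)
    (hx : xh ∈ Set.Ioo 0 b) (Q : ℝ → ℝ) :
    let g : ℝ → ℝ := fun x => xh * cH * (b - x) / (b * (b - xh))
    let uL : ℝ → ℝ := fun x => θ * Q x - g x
    let uH : ℝ → ℝ := fun x => θ * Q x - cH + ((b - x) / x) * g x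
    (uL xh = θ * Q xh - (xh / b) * cH ∧ uH xh = θ * Q xh - (xh / b) * cH) ∧
    (∀ x ∈ Set.Ioo 0 xh, uL x < uH x) ∧
    (∀ x ∈ Set.Ioo xh b, uH x < uL x) :=
  stmt_5_general b cH xh θ hc hx Q
end

section
/- (Claim in the proof of Theorem 1) Let Q1 : [0,1] → ℝ be nondecreasing with Q1(0) ≥ 0, and suppose Q(x) = Q1(x) + Q1(1−x) is such that SW(x) = θ0·Q(x) − x·c_H is concave on [0,1], where 0 < θ1 ≤ θ2, θ0 = (θ1+θ2)/2, and c_H > 0. Let x* ∈ [0,1/2] be a maximizer of SW over [0,1], and suppose 0 ≤ x̃ < x_IR ≤ x*. Then the half-participation welfare at x̃ is at most the full-participation welfare at x_IR: (1/2)·θ2·(Q1(x̃) + Q1(1/2 − x̃)) − x̃·c_H ≤ θ0·Q(x_IR) − x_IR·c_H. -/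
open Set

theorem ConcaveOn.apply_le_of_le_of_le {𝕜 β : Type*} [Field 𝕜] [LinearOrder 𝕜]
    [IsStrictOrderedRing 𝕜] [AddCommMonoid β] [LinearOrder β] [IsOrderedAddMonoid β]
    [Module 𝕜 β] [PosSMulStrictMono 𝕜 β] {s : Set 𝕜} {f : 𝕜 → β} (hf : ConcaveOn 𝕜 s f)
    {x y m : 𝕜} (hx : x ∈ s) (hm : m ∈ s) (hxy : x ≤ y) (hym : y ≤ m) (hfm : f x ≤ f m) :
    f x ≤ f y := by
  have hseg : y ∈ segment 𝕜 x m := segment_eq_Icc (hxy.trans hym) ▸ ⟨hxy, hym⟩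
  simpa [min_eq_left hfm] using hf.ge_on_segment hx hm hseg

theorem half_participation_le_full_participation {Q1 : ℝ → ℝ}
    (hmono : MonotoneOn Q1 (Icc 0 1)) (h0 : 0 ≤ Q1 0) {θ1 θ2 x : ℝ} (hθ1 : 0 ≤ θ1)
    (h12 : θ1 ≤ θ2) (hx0 : 0 ≤ x) (hx : x ≤ 1 / 2) :
    (1 / 2) * θ2 * (Q1 x + Q1 (1 / 2 - x)) ≤ ((θ1 + θ2) / 2) * (Q1 x + Q1 (1 - x)) := by
  have hnonneg : ∀ y ∈ Icc (0 : ℝ) 1, 0 ≤ Q1 y := fun y hy =>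
    h0.trans (hmono (left_mem_Icc.2 zero_le_one) hy hy.1)
  have hx_mem : x ∈ Icc (0 : ℝ) 1 := ⟨hx0, by linarith⟩
  have hhalf_mem : 1 / 2 - x ∈ Icc (0 : ℝ) 1 := ⟨by linarith, by linarith⟩
  have hQ : Q1 (1 / 2 - x) ≤ Q1 (1 - x) :=
    hmono hhalf_mem ⟨by linarith, by linarith⟩ (by linarith)
  have hB : 0 ≤ Q1 x + Q1 (1 - x) := by linarith [hnonneg x hx_mem, hnonneg _ hhalf_mem]
  calc (1 / 2) * θ2 * (Q1 x + Q1 (1 / 2 - x))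
      ≤ (1 / 2) * θ2 * (Q1 x + Q1 (1 - x)) := by gcongr; linarith
    _ ≤ ((θ1 + θ2) / 2) * (Q1 x + Q1 (1 - x)) := by gcongr; linarith

theorem stmt_7_general (Q1 : ℝ → ℝ) (hmono : MonotoneOn Q1 (Set.Icc 0 1)) (h0 : 0 ≤ Q1 0)
    (θ1 θ2 cH : ℝ) (hθ1 : 0 < θ1) (h12 : θ1 ≤ θ2)
    (hconc : ConcaveOn ℝ (Set.Icc 0 1)
      (fun x => ((θ1 + θ2) / 2) * (Q1 x + Q1 (1 - x)) - x * cH))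
    (xs xIR xt : ℝ) (hxs : xs ∈ Set.Icc (0 : ℝ) (1 / 2))
    (hmax : ∀ x ∈ Set.Icc (0 : ℝ) 1,
      ((θ1 + θ2) / 2) * (Q1 x + Q1 (1 - x)) - x * cH ≤
        ((θ1 + θ2) / 2) * (Q1 xs + Q1 (1 - xs)) - xs * cH)
    (hxt : 0 ≤ xt) (h1 : xt < xIR) (h2 : xIR ≤ xs) :
    (1 / 2) * θ2 * (Q1 xt + Q1 (1 / 2 - xt)) - xt * cH ≤
      ((θ1 + θ2) / 2) * (Q1 xIR + Q1 (1 - xIR)) - xIR * cH := by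
  have hxt_mem : xt ∈ Icc (0 : ℝ) 1 := ⟨hxt, by linarith [hxs.2]⟩
  have hxs_mem : xs ∈ Icc (0 : ℝ) 1 := ⟨hxs.1, by linarith [hxs.2]⟩
  have hhalf := half_participation_le_full_participation hmono h0 hθ1.le h12 hxt
    (by linarith [hxs.2])
  have hfull := hconc.apply_le_of_le_of_le hxt_mem hxs_mem h1.le h2 (hmax xt hxt_mem)
  linarith

/-- Claim in the proof of Theorem 1: With `Q1` nondecreasing on
`[0,1]`, `Q1(0) ≥ 0`, concave social welfare `SW(x) = θ0·(Q1(x)+Q1(1−x)) − x·c_H`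
where `θ0 = (θ1+θ2)/2`, `0 < θ1 ≤ θ2`, `c_H > 0`, a maximizer `x* ∈ [0,1/2]`
of `SW` over `[0,1]`, and `0 ≤ x̃ < x_IR ≤ x*`, the half-participation welfare
at `x̃` is at most the full-participation welfare at `x_IR`. -/
theorem stmt_7 (Q1 : ℝ → ℝ) (hmono : MonotoneOn Q1 (Set.Icc 0 1)) (h0 : 0 ≤ Q1 0)
    (θ1 θ2 cH : ℝ) (hθ1 : 0 < θ1) (h12 : θ1 ≤ θ2) (hc : 0 < cH)
    (hconc : ConcaveOn ℝ (Set.Icc 0 1)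
      (fun x => ((θ1 + θ2) / 2) * (Q1 x + Q1 (1 - x)) - x * cH))
    (xs xIR xt : ℝ) (hxs : xs ∈ Set.Icc (0 : ℝ) (1 / 2))
    (hmax : ∀ x ∈ Set.Icc (0 : ℝ) 1,
      ((θ1 + θ2) / 2) * (Q1 x + Q1 (1 - x)) - x * cH ≤
        ((θ1 + θ2) / 2) * (Q1 xs + Q1 (1 - xs)) - xs * cH)
    (hxt : 0 ≤ xt) (h1 : xt < xIR) (h2 : xIR ≤ xs) :
    (1 / 2) * θ2 * (Q1 xt + Q1 (1 / 2 - xt)) - xt * cH ≤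
      ((θ1 + θ2) / 2) * (Q1 xIR + Q1 (1 - xIR)) - xIR * cH :=
  stmt_7_general Q1 hmono h0 θ1 θ2 cH hθ1 h12 hconc xs xIR xt hxs hmax hxt h1 h2
end

section
/- (Theorem 1, PoA lower bound) Let Q1 : [0,1] → ℝ be nondecreasing with Q1(0) ≥ 0, and suppose SW(x) = θ0·(Q1(x)+Q1(1−x)) − x·c_H is concave on [0,1], where θ0 > 0 and c_H > 0. Let x* be a maximizer of SW over [0,1], and let m ∈ [0, x*] be arbitrary (in particular m = min(x*, x_IR) for any point x_IR ≥ 0 where the type-1 individual-rationality constraint holds). Then SW(m) ≥ (1/2)·SW(x) for every x ∈ [0,1]. Consequently the optimal side-payment mechanism's welfare SW_g satisfies SW_g ≥ (1/2)·SW(x*), i.e., PoA_g ≥ 1/2. -/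
/-!
Monotonicity of `Q1` gives `SW(x) ≤ 2 θ0 Q1(1) ≤ 2 θ0 (Q1(0) + Q1(1)) = 2 SW(0)` for every
`x ∈ [0,1]`. Since `x*` is a maximizer, `SW(0) ≤ SW(x*)`, so by concavity `SW` stays above `SW(0)`
on the whole segment `[0, x*]`, in particular at `m`.
-/

open Set

def socialWelfare (Q1 : ℝ → ℝ) (θ0 cH x : ℝ) : ℝ :=
  θ0 * (Q1 x + Q1 (1 - x)) - x * cH

theorem ConcaveOn.le_of_mem_segment_of_le {s : Set ℝ} {f : ℝ → ℝ} (hf : ConcaveOn ℝ s f)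
    {a b m : ℝ} (ha : a ∈ s) (hb : b ∈ s) (hab : f a ≤ f b) (hm : m ∈ segment ℝ a b) :
    f a ≤ f m :=
  min_eq_left hab ▸ hf.ge_on_segment ha hb hm

theorem MonotoneOn.add_apply_one_sub_le {Q : ℝ → ℝ} (hQ : MonotoneOn Q (Icc 0 1)) {x : ℝ}
    (hx : x ∈ Icc (0 : ℝ) 1) : Q x + Q (1 - x) ≤ 2 * Q 1 := by
  have h1 : (1 : ℝ) ∈ Icc (0 : ℝ) 1 := right_mem_Icc.mpr zero_le_one
  have hx' : 1 - x ∈ Icc (0 : ℝ) 1 := ⟨by linarith [hx.2], by linarith [hx.1]⟩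
  linarith [hQ hx h1 hx.2, hQ hx' h1 (by linarith [hx.1])]

theorem socialWelfare_le_two_mul_socialWelfare_zero {Q1 : ℝ → ℝ}
    (hmono : MonotoneOn Q1 (Icc 0 1)) (h0 : 0 ≤ Q1 0) {θ0 cH : ℝ} (hθ : 0 ≤ θ0) (hc : 0 ≤ cH)
    {x : ℝ} (hx : x ∈ Icc (0 : ℝ) 1) :
    socialWelfare Q1 θ0 cH x ≤ 2 * socialWelfare Q1 θ0 cH 0 := by
  have hsum := hmono.add_apply_one_sub_le hx
  have hcost : 0 ≤ x * cH := mul_nonneg hx.1 hc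
  unfold socialWelfare
  rw [sub_zero, zero_mul, sub_zero]
  nlinarith [mul_le_mul_of_nonneg_left hsum hθ, mul_nonneg hθ h0]

/-- Theorem 1, PoA lower bound: With `Q1` nondecreasing on
`[0,1]`, `Q1(0) ≥ 0`, `θ0 > 0`, `c_H > 0` and concave
`SW(x) = θ0·(Q1(x)+Q1(1−x)) − x·c_H` on `[0,1]`, if `x*` maximizes `SW` over
`[0,1]` and `m ∈ [0,x*]`, then `SW(m) ≥ (1/2)·SW(x)` for every `x ∈ [0,1]`;
in particular the optimal side-payment welfare satisfies `PoA_g ≥ 1/2`. -/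
theorem stmt_8 (Q1 : ℝ → ℝ) (hmono : MonotoneOn Q1 (Set.Icc 0 1)) (h0 : 0 ≤ Q1 0)
    (θ0 cH : ℝ) (hθ : 0 < θ0) (hc : 0 < cH)
    (hconc : ConcaveOn ℝ (Set.Icc 0 1)
      (fun x => θ0 * (Q1 x + Q1 (1 - x)) - x * cH))
    (xs : ℝ) (hxs : xs ∈ Set.Icc (0 : ℝ) 1)
    (hmax : ∀ x ∈ Set.Icc (0 : ℝ) 1,
      θ0 * (Q1 x + Q1 (1 - x)) - x * cH ≤ θ0 * (Q1 xs + Q1 (1 - xs)) - xs * cH)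
    (m : ℝ) (hm : m ∈ Set.Icc 0 xs) :
    ∀ x ∈ Set.Icc (0 : ℝ) 1,
      (1 / 2) * (θ0 * (Q1 x + Q1 (1 - x)) - x * cH) ≤
        θ0 * (Q1 m + Q1 (1 - m)) - m * cH := by
  intro x hx
  have h0mem : (0 : ℝ) ∈ Icc (0 : ℝ) 1 := left_mem_Icc.mpr zero_le_one
  have hhalf := socialWelfare_le_two_mul_socialWelfare_zero hmono h0 hθ.le hc.le hx
  calc (1 / 2) * socialWelfare Q1 θ0 cH x ≤ socialWelfare Q1 θ0 cH 0 := by linarith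
    _ ≤ socialWelfare Q1 θ0 cH m :=
      hconc.le_of_mem_segment_of_le h0mem hxs (hmax 0 h0mem) (by rwa [segment_eq_Icc hxs.1])
end

section
/- (Theorem 1, tightness) Let q > 0, θ0 > 0, let Q1(x) = 2qx on [0,1/2] and Q1(x) = q on [1/2,1], and fix c_H ∈ (0, 2θ0 q). For θ1 ∈ (0, c_H/(2q)) with θ2 = 2θ0 − θ1: (i) the social optimum is sup over x ∈ [0,1] of θ0·(Q1(x)+Q1(1−x)) − x·c_H = 2θ0 q − c_H/2; (ii) the type-1 IR boundary, i.e., the unique x ≥ 0 with θ1·(q + 2qx) = x·c_H, is x_IR = θ1 q/(c_H − 2θ1 q), and x_IR → 0 as θ1 → 0⁺, so SW(x_IR) → θ0 q; (iii) the half-participation optimum sup over x ∈ [0,1/2] of (1/2)·θ2·(Q1(x)+Q1(1/2−x)) − x·c_H equals (1/2)·θ2·q, which tends to θ0 q as θ1 → 0⁺; (iv) the infimum over c_H ∈ (0, 2θ0 q) of θ0 q/(2θ0 q − c_H/2) equals 1/2. Hence the side-payment mechanism with two user types has price of anarchy PoA_g = 1/2. -/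
/-!
On `[0,1]`, `Q₁ x + Q₁ (1 - x) = q + 2q·min(x, 1 - x)`, so the full-participation welfare is
piecewise linear, increasing up to its kink at `x = 1/2` because `c_H < 2θ₀q`. With only the
high type present, `Q₁ x + Q₁ (1/2 - x) = q` is constant on `[0, 1/2]`, so the optimum is at
`x = 0`. As `Q₁ = min (2q·x) q` is continuous and `x_IR → 0`, `SW(x_IR) → SW(0) = θ₀q`.
Finally `c ↦ θ₀q / (2θ₀q - c/2)` maps `(0, 2θ₀q)` onto `(1/2, 1)`.
-/

open Filter Topology Set

namespace ContentRouting

noncomputable section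

/-- The paper's `Q₁`. -/
def quality (q x : ℝ) : ℝ := if x ≤ 1 / 2 then 2 * q * x else q

def welfare (q θ cH x : ℝ) : ℝ := θ * (quality q x + quality q (1 - x)) - x * cH

/-- Welfare when only the high type participates, i.e. total mass `1/2`. -/
def halfWelfare (q θ cH x : ℝ) : ℝ :=
  (1 / 2) * θ * (quality q x + quality q (1 / 2 - x)) - x * cH

def irBoundary (q θ cH : ℝ) : ℝ := θ * q / (cH - 2 * θ * q)

variable {q θ cH : ℝ}

theorem quality_eq_min (hq : 0 ≤ q) (x : ℝ) : quality q x = min (2 * q * x) q := by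
  unfold quality
  split_ifs with hx
  · exact (min_eq_left (by nlinarith)).symm
  · exact (min_eq_right (by nlinarith)).symm

theorem continuous_quality (hq : 0 ≤ q) : Continuous (quality q) := by
  simp only [funext (quality_eq_min hq)]
  fun_prop

theorem continuous_welfare (hq : 0 ≤ q) : Continuous (welfare q θ cH) := by
  unfold welfare
  have := continuous_quality hq
  fun_prop

theorem quality_zero : quality q 0 = 0 := by norm_num [quality]

theorem quality_half : quality q (1 / 2) = q := by
  rw [quality, if_pos le_rfl]
  ring

theorem quality_one : quality q 1 = q := by norm_num [quality]

theorem welfare_zero : welfare q θ cH 0 = θ * q := by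
  simp [welfare, quality_zero, quality_one]

theorem welfare_half : welfare q θ cH (1 / 2) = 2 * θ * q - cH / 2 := by
  norm_num [welfare, quality_half]
  ring

theorem welfare_le_welfare_half (hq : 0 ≤ q) (hθ : 0 ≤ θ) (hc : 0 ≤ cH)
    (hcθ : cH ≤ 2 * θ * q) (x : ℝ) : welfare q θ cH x ≤ welfare q θ cH (1 / 2) := by
  rw [welfare_half, welfare, quality_eq_min hq, quality_eq_min hq]
  rcases le_total x (1 / 2) with hx | hx
  · have hQ : min (2 * q * x) q + min (2 * q * (1 - x)) q ≤ 2 * q * x + q :=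
      add_le_add (min_le_left _ _) (min_le_right _ _)
    nlinarith [mul_le_mul_of_nonneg_left hQ hθ, mul_nonneg (sub_nonneg.2 hx) (sub_nonneg.2 hcθ)]
  · have hQ : min (2 * q * x) q + min (2 * q * (1 - x)) q ≤ q + 2 * q * (1 - x) :=
      add_le_add (min_le_right _ _) (min_le_left _ _)
    nlinarith [mul_le_mul_of_nonneg_left hQ hθ, mul_nonneg (sub_nonneg.2 hx) (mul_nonneg hθ hq)]

theorem halfWelfare_zero : halfWelfare q θ cH 0 = (1 / 2) * θ * q := by
  norm_num [halfWelfare, quality_zero, quality_half]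

theorem halfWelfare_le_halfWelfare_zero (hq : 0 ≤ q) (hθ : 0 ≤ θ) (hc : 0 ≤ cH) {x : ℝ}
    (hx : 0 ≤ x) : halfWelfare q θ cH x ≤ halfWelfare q θ cH 0 := by
  rw [halfWelfare_zero, halfWelfare, quality_eq_min hq, quality_eq_min hq]
  have hQ : min (2 * q * x) q + min (2 * q * (1 / 2 - x)) q ≤ 2 * q * x + 2 * q * (1 / 2 - x) :=
    add_le_add (min_le_left _ _) (min_le_left _ _)
  have hθ' : (0 : ℝ) ≤ 1 / 2 * θ := by positivity
  nlinarith [mul_le_mul_of_nonneg_left hQ hθ', mul_nonneg hx hc]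

theorem ir_indifferent_iff (h : cH - 2 * θ * q ≠ 0) {x : ℝ} :
    θ * (q + 2 * q * x) = x * cH ↔ x = irBoundary q θ cH := by
  rw [irBoundary, eq_div_iff h]
  constructor <;> intro hx <;> linarith

theorem tendsto_irBoundary (hc : cH ≠ 0) :
    Tendsto (fun θ => irBoundary q θ cH) (𝓝 0) (𝓝 0) := by
  have : ContinuousAt (fun θ => irBoundary q θ cH) 0 :=
    ContinuousAt.div (by fun_prop) (by fun_prop) (by simpa using hc)
  simpa [irBoundary] using this.tendsto

theorem priceOfAnarchy_range {a : ℝ} (ha : 0 < a) :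
    {w : ℝ | ∃ cH ∈ Ioo 0 (2 * a), w = a / (2 * a - cH / 2)} = Ioo (1 / 2) 1 := by
  ext w
  constructor
  · rintro ⟨c, ⟨hc0, hc⟩, rfl⟩
    have hden : 0 < 2 * a - c / 2 := by linarith
    constructor
    · rw [lt_div_iff₀ hden]; linarith
    · rw [div_lt_one hden]; linarith
  · rintro ⟨hw, hw1⟩
    have hw0 : 0 < w := by linarith
    -- solve `a / (2a - c/2) = w` for `c`
    refine ⟨4 * a - 2 * a / w, ⟨?_, ?_⟩, ?_⟩
    · rw [sub_pos, div_lt_iff₀ hw0]; nlinarith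
    · have : 2 * a < 2 * a / w := by rw [lt_div_iff₀ hw0]; nlinarith
      linarith
    · field_simp
      ring

end

end ContentRouting

open ContentRouting

/-- Theorem 1, tightness: For `Q1(x) = 2qx` on `[0,1/2]`,
`Q1(x) = q` on `[1/2,1]`, `c_H ∈ (0,2θ0 q)` and `θ1 ∈ (0, c_H/(2q))` with
`θ2 = 2θ0 − θ1`: (i) the social optimum is `2θ0 q − c_H/2`, attained at `1/2`;
(ii) the type-1 IR boundary is `x_IR = θ1 q/(c_H − 2θ1 q)` (the unique
nonnegative solution of `θ1(q+2qx) = x·c_H`), and `x_IR → 0`,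
`SW(x_IR) → θ0 q` as `θ1 → 0⁺`; (iii) the half-participation optimum is
`(1/2)θ2 q`, attained at `x = 0`, tending to `θ0 q` as `θ1 → 0⁺`; (iv) the
infimum over `c_H` of `θ0 q/(2θ0 q − c_H/2)` is `1/2`. Hence `PoA_g = 1/2`. -/
theorem stmt_9 (q θ0 : ℝ) (hq : 0 < q) (hθ : 0 < θ0) :
    let Q1 : ℝ → ℝ := fun x => if x ≤ 1 / 2 then 2 * q * x else q
    let Q : ℝ → ℝ := fun x => Q1 x + Q1 (1 - x)
    (∀ cH ∈ Set.Ioo (0 : ℝ) (2 * θ0 * q),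
      ((∀ x ∈ Set.Icc (0 : ℝ) 1, θ0 * Q x - x * cH ≤ 2 * θ0 * q - cH / 2) ∧
        θ0 * Q (1 / 2) - (1 / 2) * cH = 2 * θ0 * q - cH / 2) ∧
      (∀ θ1 ∈ Set.Ioo (0 : ℝ) (cH / (2 * q)),
        (θ1 * (q + 2 * q * (θ1 * q / (cH - 2 * θ1 * q))) =
            (θ1 * q / (cH - 2 * θ1 * q)) * cH ∧
          (∀ x : ℝ, 0 ≤ x → θ1 * (q + 2 * q * x) = x * cH →
            x = θ1 * q / (cH - 2 * θ1 * q))) ∧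
        (∀ x ∈ Set.Icc (0 : ℝ) (1 / 2),
          (1 / 2) * (2 * θ0 - θ1) * (Q1 x + Q1 (1 / 2 - x)) - x * cH ≤
            (1 / 2) * (2 * θ0 - θ1) * q) ∧
        (1 / 2) * (2 * θ0 - θ1) * (Q1 0 + Q1 (1 / 2 - 0)) - 0 * cH =
          (1 / 2) * (2 * θ0 - θ1) * q) ∧
      Filter.Tendsto (fun θ1 : ℝ => θ1 * q / (cH - 2 * θ1 * q))
        (nhdsWithin 0 (Set.Ioi 0)) (nhds 0) ∧
      Filter.Tendsto (fun θ1 : ℝ =>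
          θ0 * Q (θ1 * q / (cH - 2 * θ1 * q)) - (θ1 * q / (cH - 2 * θ1 * q)) * cH)
        (nhdsWithin 0 (Set.Ioi 0)) (nhds (θ0 * q)) ∧
      Filter.Tendsto (fun θ1 : ℝ => (1 / 2) * (2 * θ0 - θ1) * q)
        (nhdsWithin 0 (Set.Ioi 0)) (nhds (θ0 * q))) ∧
    IsGLB {w : ℝ | ∃ cH ∈ Set.Ioo (0 : ℝ) (2 * θ0 * q),
        w = θ0 * q / (2 * θ0 * q - cH / 2)} (1 / 2) := by
  intro Q1 Q
  refine ⟨fun cH ⟨hc0, hcθ⟩ => ?_, ?_⟩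
  · have hIR := tendsto_irBoundary (q := q) hc0.ne'
    refine ⟨⟨fun x _ => (welfare_le_welfare_half hq.le hθ.le hc0.le hcθ.le x).trans_eq
      welfare_half, welfare_half⟩, fun θ1 ⟨_, hθ1⟩ => ?_,
      tendsto_nhdsWithin_of_tendsto_nhds hIR, tendsto_nhdsWithin_of_tendsto_nhds ?_,
      tendsto_nhdsWithin_of_tendsto_nhds ?_⟩
    · have hθ1q : θ1 * (2 * q) < cH := (lt_div_iff₀ (by positivity)).1 hθ1
      have hθ2 : 0 ≤ 2 * θ0 - θ1 := by nlinarith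
      have hden : cH - 2 * θ1 * q ≠ 0 := by linarith
      refine ⟨⟨(ir_indifferent_iff hden).2 rfl, fun x _ hx => (ir_indifferent_iff hden).1 hx⟩,
        fun x hx => ?_, halfWelfare_zero⟩
      exact (halfWelfare_le_halfWelfare_zero hq.le hθ2 hc0.le hx.1).trans_eq halfWelfare_zero
    · have := ((continuous_welfare (θ := θ0) (cH := cH) hq.le).tendsto 0).comp hIR
      rwa [welfare_zero] at this
    · convert (by fun_prop : Continuous fun θ1 : ℝ => (1 / 2) * (2 * θ0 - θ1) * q).tendsto 0
        using 2
      ring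
  · simpa only [mul_assoc, priceOfAnarchy_range (mul_pos hθ hq)] using isGLB_Ioo (by norm_num)
end

section
/- (Theorem 3, thresholds and the benefit of user diversity) Let 0 < θ1 < θ2, θ0 = (θ1+θ2)/2, 0 < Q̲ < Q̄, and c_H > 0. Then: (a) θ0·Q̄ − ((θ1·Q̄ + θ2·Q̲)/(2·θ2·Q̲))·c_H > θ0·Q̲ if and only if c_H < (θ1+θ2)·(Q̄−Q̲)·θ2·Q̲/(θ1·Q̄ + θ2·Q̲); (b) if θ2/θ1 > Q̄/Q̲ (i.e., θ2·Q̲ > θ1·Q̄), then (θ1·Q̄ + θ2·Q̲)/(2·θ2·Q̲) < 1, so the heterogeneous diversity welfare θ0·Q̄ − ((θ1·Q̄ + θ2·Q̲)/(2·θ2·Q̲))·c_H strictly exceeds the homogeneous diversity welfare θ0·Q̄ − c_H, and the threshold (θ1+θ2)·(Q̄−Q̲)·θ2·Q̲/(θ1·Q̄ + θ2·Q̲) strictly exceeds the homogeneous threshold θ0·(Q̄ − Q̲). -/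
/-!
Write `w = (θ1·Q̄ + θ2·Q̲)/(2θ2·Q̲)` for the weight of `c_H` in the heterogeneous welfare. Then
(a) is `c_H < θ0·(Q̄ − Q̲)/w`, and the threshold of the statement is this quotient with the
division by `w` cleared. The condition `θ1·Q̄ < θ2·Q̲` says exactly that `w < 1`, and dividing
or multiplying by a positive weight below one gives both inequalities of (b).
-/

lemma lt_sub_mul_iff_lt_div {K : Type*} [Field K] [LinearOrder K] [IsStrictOrderedRing K]
    {x y w c : K} (hw : 0 < w) : x < y - w * c ↔ c < (y - x) / w := by
  rw [lt_div_iff₀' hw]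
  constructor <;> intro h <;> linarith

lemma lt_div_of_lt_one {K : Type*} [Field K] [LinearOrder K] [IsStrictOrderedRing K]
    {a w : K} (ha : 0 < a) (hw0 : 0 < w) (hw1 : w < 1) : a < a / w := by
  rw [lt_div_iff₀ hw0]
  exact mul_lt_of_lt_one_right ha hw1

lemma add_div_two_mul_lt_one {K : Type*} [Field K] [LinearOrder K] [IsStrictOrderedRing K]
    {a b : K} (hb : 0 < b) (hab : a < b) : (a + b) / (2 * b) < 1 := by
  rw [div_lt_one (by positivity)]
  linarith

lemma diversity_threshold_eq (θ1 θ2 Qlo Qhi : ℝ) :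
    (θ1 + θ2) * (Qhi - Qlo) * θ2 * Qlo / (θ1 * Qhi + θ2 * Qlo) =
      ((θ1 + θ2) / 2 * Qhi - (θ1 + θ2) / 2 * Qlo) /
        ((θ1 * Qhi + θ2 * Qlo) / (2 * θ2 * Qlo)) := by
  rw [div_div_eq_mul_div]
  ring

/-- Theorem 3, thresholds and the benefit of user diversity:
For `0 < θ1 < θ2`, `θ0 = (θ1+θ2)/2`, `0 < Q̲ < Q̄`, `c_H > 0`:
(a) `θ0·Q̄ − ((θ1·Q̄+θ2·Q̲)/(2θ2·Q̲))·c_H > θ0·Q̲` iff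
`c_H < (θ1+θ2)(Q̄−Q̲)θ2·Q̲/(θ1·Q̄+θ2·Q̲)`;
(b) if `θ2·Q̲ > θ1·Q̄` then `(θ1·Q̄+θ2·Q̲)/(2θ2·Q̲) < 1`, the heterogeneous
diversity welfare strictly exceeds the homogeneous one `θ0·Q̄ − c_H`, and the
heterogeneous threshold strictly exceeds the homogeneous threshold
`θ0·(Q̄−Q̲)`. -/
theorem stmt_12 (θ1 θ2 Qlo Qhi cH : ℝ) (h1 : 0 < θ1) (h12 : θ1 < θ2)
    (hQ0 : 0 < Qlo) (hQ : Qlo < Qhi) (hc : 0 < cH) :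
    let θ0 := (θ1 + θ2) / 2
    ((θ0 * Qlo < θ0 * Qhi - ((θ1 * Qhi + θ2 * Qlo) / (2 * θ2 * Qlo)) * cH) ↔
      cH < (θ1 + θ2) * (Qhi - Qlo) * θ2 * Qlo / (θ1 * Qhi + θ2 * Qlo)) ∧
    (θ1 * Qhi < θ2 * Qlo →
      (θ1 * Qhi + θ2 * Qlo) / (2 * θ2 * Qlo) < 1 ∧
      θ0 * Qhi - cH < θ0 * Qhi - ((θ1 * Qhi + θ2 * Qlo) / (2 * θ2 * Qlo)) * cH ∧
      θ0 * (Qhi - Qlo) <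
        (θ1 + θ2) * (Qhi - Qlo) * θ2 * Qlo / (θ1 * Qhi + θ2 * Qlo)) := by
  intro θ0
  have hθ2 : 0 < θ2 := h1.trans h12
  have hQhi : 0 < Qhi := hQ0.trans hQ
  have hw : 0 < (θ1 * Qhi + θ2 * Qlo) / (2 * θ2 * Qlo) := by positivity
  rw [diversity_threshold_eq]
  refine ⟨lt_sub_mul_iff_lt_div hw, fun hdiverse => ?_⟩
  have hw1 : (θ1 * Qhi + θ2 * Qlo) / (2 * θ2 * Qlo) < 1 := by
    rw [mul_assoc]
    exact add_div_two_mul_lt_one (by positivity) hdiverse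
  refine ⟨hw1, sub_lt_sub_left (mul_lt_of_lt_one_left hc hw1) _, ?_⟩
  rw [← mul_sub]
  exact lt_div_of_lt_one (mul_pos (by positivity) (sub_pos.mpr hQ)) hw hw1
end

section
/- (Proposition: combined mechanism, PoA ≥ 0.7) Let Q1 : [0,1] → ℝ be nondecreasing and concave with Q1(0) = 0, let 0 < θ1 ≤ θ2, θ0 = (θ1+θ2)/2, and c_H > 0. Set Q(x,1) = Q1(x)+Q1(1−x), Q(x,1/2) = Q1(x)+Q1(1/2−x), Q̲ = Q1(1), and Q̄ = 2·Q1(1/2). Define the candidate welfares C1 = θ0·Q̲; C2 = θ0·Q̄ − (θ0/θ2)·c_H; C3 = sup of θ0·Q(x,1) − x·c_H over all x ∈ [0,1/2] satisfying θ1·Q(x,1) ≥ x·c_H; and C4 = sup over x ∈ [0,1/2] of (1/2)·θ2·Q(x,1/2) − x·c_H. Then max{C1, C2, C3, C4} ≥ 0.7 · sup over x ∈ [0,1] of (θ0·Q(x,1) − x·c_H). Consequently the combined side-payment and content-restriction mechanism achieves price of anarchy PoA_ag ≥ 0.7. -/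
/-!
Fix a flow `z ≤ 1/2` (a flow `x > 1/2` has the same content as `1 - x` at a higher cost) and
write `W = θ0·Q(z,1) - z·c_H`. If `W ≤ 0` then `C1 ≥ 0` suffices, and if `z` satisfies the type-1
participation constraint then `C3 ≥ W`. Otherwise, assuming every candidate is below `0.7·W`, we
compare `W` with `C1`, `C2`, `C4` at `0` and at `z`, and `C3` at the flow `θ1·Q1(1)/c_H` where the
type-1 constraint binds. Concavity of `Q1` and of `Q(·,1)` turns each comparison into a polynomial
inequality in `r = θ1/θ0`, `t = θ2/θ0`, `p = z·c_H/(θ0·Q(z,1))` and `μ = Q1(1)/Q(z,1)`, and these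
inequalities are jointly infeasible, separately for `z ≤ 1/4` and for `z > 1/4`.
-/

open Set

section Concave

variable {f : ℝ → ℝ} {s : Set ℝ} {x y a : ℝ}

theorem ConcaveOn.le_map_combo (hf : ConcaveOn ℝ s f) (hx : x ∈ s) (hy : y ∈ s) (ha0 : 0 ≤ a)
    (ha1 : a ≤ 1) : a * f x + (1 - a) * f y ≤ f (a * x + (1 - a) * y) :=
  hf.2 hx hy ha0 (by linarith) (by ring)

theorem ConcaveOn.mul_le_map_mul (hf : ConcaveOn ℝ s f) (hs : 0 ∈ s) (hf0 : 0 ≤ f 0)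
    (hx : x ∈ s) (ha0 : 0 ≤ a) (ha1 : a ≤ 1) : a * f x ≤ f (a * x) := by
  have h := hf.le_map_combo hx hs ha0 ha1
  rw [mul_zero, add_zero] at h
  linarith [mul_nonneg (sub_nonneg.2 ha1) hf0]

theorem ConcaveOn.comp_one_sub (hf : ConcaveOn ℝ (Icc 0 1) f) :
    ConcaveOn ℝ (Icc 0 1) (fun x => f (1 - x)) := by
  refine ⟨convex_Icc 0 1, fun x hx y hy a b ha hb hab => ?_⟩
  have h := hf.2 (x := 1 - x) (y := 1 - y) ⟨by linarith [hx.2], by linarith [hx.1]⟩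
    ⟨by linarith [hy.2], by linarith [hy.1]⟩ ha hb hab
  convert h using 2
  simp only [smul_eq_mul]
  linear_combination -hab

theorem ConcaveOn.map_zero_add_map_one_le (hf : ConcaveOn ℝ (Icc 0 1) f)
    (hx : x ∈ Icc (0:ℝ) 1) : f 0 + f 1 ≤ f x + f (1 - x) := by
  have h := (hf.add hf.comp_one_sub).le_map_combo (right_mem_Icc.2 zero_le_one)
    (left_mem_Icc.2 zero_le_one) hx.1 hx.2
  simp only [Pi.add_apply, sub_zero, sub_self, mul_one, mul_zero, add_zero] at h
  linarith

theorem ConcaveOn.add_map_one_sub_le (hf : ConcaveOn ℝ (Icc 0 1) f) (hx : x ∈ Icc (0:ℝ) 1) :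
    f x + f (1 - x) ≤ 2 * f (1 / 2) := by
  have h := hf.le_map_combo (y := 1 - x) (a := 1 / 2) hx
    ⟨by linarith [hx.2], by linarith [hx.1]⟩ (by norm_num) (by norm_num)
  rw [show 1 / 2 * x + (1 - 1 / 2) * (1 - x) = 1 / 2 by ring] at h
  linarith

end Concave

namespace CombinedMechanism

variable {f : ℝ → ℝ} {x y z : ℝ}

lemma add_le_two_mul_map_one (hmono : MonotoneOn f (Icc 0 1)) (hx : x ∈ Icc (0:ℝ) 1)
    (hy : y ∈ Icc (0:ℝ) 1) : f x + f y ≤ 2 * f 1 := by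
  linarith [hmono hx (right_mem_Icc.2 zero_le_one) hx.2,
    hmono hy (right_mem_Icc.2 zero_le_one) hy.2]

lemma content_sub_add_le_half_content (hmono : MonotoneOn f (Icc 0 1))
    (hconc : ConcaveOn ℝ (Icc 0 1) f) (hf0 : 0 ≤ f 0) (hz : z ∈ Icc (0:ℝ) (1/2)) :
    (f z + f (1 - z) - f 1) + (1 - 2 * z) * f (1/2) ≤ f z + f (1/2 - z) := by
  have h1 : f (1 - z) ≤ f 1 := hmono ⟨by linarith [hz.2], by linarith [hz.1]⟩
    (right_mem_Icc.2 zero_le_one) (by linarith [hz.1])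
  have h2 := hconc.mul_le_map_mul (a := 1 - 2 * z) (x := 1/2) (left_mem_Icc.2 zero_le_one) hf0
    ⟨by norm_num, by norm_num⟩ (by linarith [hz.2]) (by linarith [hz.1])
  rw [show (1 - 2 * z) * (1/2) = 1/2 - z by ring] at h2
  linarith

lemma two_mul_content_sub_le_half_content (hmono : MonotoneOn f (Icc 0 1)) (hz0 : 0 ≤ z)
    (hz : z ≤ 1/4) : 2 * (f z + f (1 - z) - f 1) ≤ f z + f (1/2 - z) := by
  have h1 : f (1 - z) ≤ f 1 :=
    hmono ⟨by linarith, by linarith⟩ (right_mem_Icc.2 zero_le_one) (by linarith)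
  have h2 : f z ≤ f (1/2 - z) := hmono ⟨hz0, by linarith⟩ ⟨by linarith, by linarith⟩ (by linarith)
  linarith

lemma content_sub_le_mul_half_content (hmono : MonotoneOn f (Icc 0 1))
    (hconc : ConcaveOn ℝ (Icc 0 1) f) (hf0 : 0 ≤ f 0) (hz : 1/4 < z) (hz2 : z ≤ 1/2) :
    (f z + f (1 - z) - f 1) / 2 ≤ z * (f z + f (1/2 - z)) := by
  have hz0 : 0 < z := by linarith
  have h1 : f (1 - z) ≤ f 1 :=
    hmono ⟨by linarith, by linarith⟩ (right_mem_Icc.2 zero_le_one) (by linarith)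
  have h2 := hconc.mul_le_map_mul (a := (1/2 - z) / z) (x := z) (left_mem_Icc.2 zero_le_one) hf0
    ⟨hz0.le, by linarith⟩ (div_nonneg (by linarith) hz0.le) ((div_le_one hz0).2 (by linarith))
  rw [div_mul_cancel₀ _ hz0.ne'] at h2
  have h3 : (1/2 - z) * f z ≤ z * f (1/2 - z) := by
    rwa [div_mul_eq_mul_div, div_le_iff₀' hz0] at h2
  linarith

lemma exists_binding_point (hconc : ConcaveOn ℝ (Icc 0 1) f) (h0 : f 0 = 0) {θ1 cH : ℝ}
    (hθ1 : 0 ≤ θ1) (hc : 0 < cH) (hz0 : 0 < z) (hz1 : z ≤ 1) (hf1 : 0 ≤ f 1)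
    (hbind : θ1 * f 1 ≤ z * cH) :
    ∃ l ∈ Icc (0:ℝ) 1, l * (z * cH) = θ1 * f 1 ∧
      l * z * cH ≤ θ1 * (f (l * z) + f (1 - l * z)) ∧
      l * (f z + f (1 - z)) + (1 - l) * f 1 ≤ f (l * z) + f (1 - l * z) := by
  have hzc : 0 < z * cH := mul_pos hz0 hc
  set l := θ1 * f 1 / (z * cH)
  have hl : l ∈ Icc (0:ℝ) 1 :=
    ⟨div_nonneg (mul_nonneg hθ1 hf1) hzc.le, (div_le_one hzc).2 hbind⟩
  have hx : l * z ∈ Icc (0:ℝ) 1 :=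
    ⟨mul_nonneg hl.1 hz0.le, (mul_le_of_le_one_left hz0.le hl.2).trans hz1⟩
  have hlz : l * (z * cH) = θ1 * f 1 := div_mul_cancel₀ _ hzc.ne'
  refine ⟨l, hl, hlz, ?_, ?_⟩
  · have h := hconc.map_zero_add_map_one_le hx
    rw [h0, zero_add] at h
    linarith [mul_le_mul_of_nonneg_left h hθ1]
  · have h := (hconc.add hconc.comp_one_sub).le_map_combo ⟨hz0.le, hz1⟩
      (left_mem_Icc.2 zero_le_one) hl.1 hl.2
    simpa only [Pi.add_apply, mul_zero, add_zero, sub_zero, h0, zero_add] using h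

lemma false_of_normalized_bounds_small_flow {r t p : ℝ} (hrt : r + t = 2) (hr : 0 < r)
    (hrp : r < p)
    (h124 : t * (3/10 + 7/10*p)^2 + t/2 * (3/10 + 7/10*p) - p
        < 2 * (3/10 + 7/10*p) * (7/10 * (1-p) + p))
    (h3 : t < 14/5 * (1-p))
    (h56 : (t - 7/10*(1-p) - p) * (p*(1-r) + r*(1/2 - 7/10*(1-p)))
        < t * (7/10*(1-p)) * (p - r/2)) : False := by
  obtain rfl : t = 2 - r := by linarith
  nlinarith [sq_nonneg (p-1/11), sq_nonneg (r-p), mul_pos hr (sub_pos.2 hrp), sq_nonneg p,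
    sq_nonneg r, mul_pos hr hr, sq_nonneg (1-p), sq_nonneg (p-1/10)]

lemma false_of_normalized_bounds_large_flow {r t p μ : ℝ} (hrt : r + t = 2) (hr : 0 < r)
    (hrp : r < p) (hμ : 1/2 ≤ μ) (h1 : μ < 7/10*(1-p))
    (h5 : μ * (p*(1-r) + r*(1/2 - 7/10*(1-p))) < 7/10*(1-p) * (p - r/2))
    (h7 : t/4 * (1-μ) < (7/10*(1-p) + p)/2)
    (h27 : t^2 * (3/10 + 7/10*p)/4 * (1-μ) < (7/10*(1-p) + p) * p) : False := by
  obtain rfl : t = 2 - r := by linarith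
  nlinarith [mul_pos hr (sub_pos.2 hrp), sq_nonneg (p-r), sq_nonneg (μ-1/2), sq_nonneg (p-3/10),
    mul_nonneg (sub_nonneg.2 hμ) (sub_pos.2 hrp).le, mul_pos hr hr, sq_nonneg (1-p),
    mul_nonneg (sub_nonneg.2 hμ) hr.le]

theorem false_of_normalized_bounds {r t p μ z : ℝ} (hrt : r + t = 2) (hr : 0 < r)
    (hrp : r < p) (hμ : 1/2 ≤ μ) (hz2 : z ≤ 1/2)
    (h1 : μ < 7/10 * (1 - p))
    (h2 : t * z * (3/10 + 7/10 * p) < p)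
    (h3 : t < 14/5 * (1 - p))
    (h4 : t/2 * ((1 - μ) + (1 - 2*z)/2) - p < 7/10 * (1 - p))
    (h5 : r * μ + (p - r * μ) * μ - r * μ * p < 7/10 * (1 - p) * p)
    (h6 : z ≤ 1/4 → t * (1 - μ) - p < 7/10 * (1 - p))
    (h7 : 1/4 < z → t/4 * (1 - μ) - z * p < 7/10 * (1 - p) * z) : False := by
  have ht : 0 < t := by linarith
  have hs : 0 < 3/10 + 7/10 * p := by linarith
  -- `h2` bounds `z`, which eliminates it from `h4` (with `1 - μ` bounded below by `h1`)
  have h124 : t * (3/10 + 7/10*p)^2 + t/2 * (3/10 + 7/10*p) - p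
      < 2 * (3/10 + 7/10*p) * (7/10 * (1-p) + p) := by
    have h4' : t/2 * ((3/10 + 7/10*p) + (1 - 2*z)/2) - p < 7/10 * (1 - p) := by
      linarith [mul_pos ht (show 0 < (1-μ) - (3/10 + 7/10*p) by linarith)]
    linarith [mul_lt_mul_of_pos_right h4' (by linarith : (0:ℝ) < 2 * (3/10 + 7/10*p))]
  have h5' : μ * (p*(1-r) + r*(1/2 - 7/10*(1-p))) < 7/10*(1-p) * (p - r/2) := by
    linarith [mul_nonneg (mul_nonneg hr.le (by linarith : (0:ℝ) ≤ μ - 1/2))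
      (by linarith : (0:ℝ) ≤ 7/10*(1-p) - μ)]
  rcases le_or_gt z (1/4) with hz4 | hz4
  · have hc : 0 < p*(1-r) + r*(1/2 - 7/10*(1-p)) := by
      by_contra! hc
      linarith [mul_nonneg (by linarith : (0:ℝ) ≤ 7/10*(1-p) - μ) (neg_nonneg.2 hc),
        mul_nonneg hr.le (sq_nonneg (1-p))]
    refine false_of_normalized_bounds_small_flow hrt hr hrp h124 h3 ?_
    linarith [mul_lt_mul_of_pos_right (show t - 7/10*(1-p) - p < t*μ by linarith [h6 hz4]) hc,
      mul_lt_mul_of_pos_left h5' ht]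
  · have h7' : t/4 * (1-μ) < (7/10*(1-p) + p) * z := by linarith [h7 hz4]
    refine false_of_normalized_bounds_large_flow hrt hr hrp hμ h1 h5' ?_ ?_
    · linarith [mul_nonneg (by linarith : (0:ℝ) ≤ 7/10*(1-p) + p)
        (by linarith : (0:ℝ) ≤ 1/2 - z)]
    · linarith [mul_lt_mul_of_pos_right h7' (mul_pos ht hs),
        mul_lt_mul_of_pos_left h2 (by linarith : (0:ℝ) < 7/10*(1-p) + p)]

theorem false_of_candidate_bounds {θ0 θ1 θ2 y z q U l : ℝ} (hθ : θ1 + θ2 = 2 * θ0)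
    (hθ1 : 0 < θ1) (h12 : θ1 ≤ θ2) (hz2 : z ≤ 1/2) (hU : q ≤ 2 * U)
    (hinf : θ1 * q < y) (hW : y < θ0 * q)
    (h1 : θ0 * U < 7/10 * (θ0 * q - y))
    (h2 : θ2 * z * (θ0 * q - 7/10 * (θ0 * q - y)) < θ0 * y)
    (h3 : θ2 * q < 14/5 * (θ0 * q - y))
    (h4 : θ2/2 * ((q - U) + (1 - 2*z) * q / 2) - y < 7/10 * (θ0 * q - y))
    (h5 : θ0 * (l * q + (1 - l) * U) - θ1 * U < 7/10 * (θ0 * q - y)) (hl : l * y = θ1 * U)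
    (h6 : z ≤ 1/4 → θ2 * (q - U) - y < 7/10 * (θ0 * q - y))
    (h7 : 1/4 < z → θ2/4 * (q - U) - z * y < 7/10 * (θ0 * q - y) * z) : False := by
  have hθ0 : 0 < θ0 := by linarith
  have hq : 0 < q := by nlinarith
  have hn : 0 < θ0 * q := mul_pos hθ0 hq
  obtain ⟨r, rfl⟩ : ∃ r, θ1 = r * θ0 := ⟨θ1 / θ0, by field_simp⟩
  obtain ⟨t, rfl⟩ : ∃ t, θ2 = t * θ0 := ⟨θ2 / θ0, by field_simp⟩
  obtain ⟨p, rfl⟩ : ∃ p, y = p * (θ0 * q) := ⟨y / (θ0 * q), by field_simp⟩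
  obtain ⟨μ, rfl⟩ : ∃ μ, U = μ * q := ⟨U / q, by field_simp⟩
  have hr : 0 < r := pos_of_mul_pos_left hθ1 hθ0.le
  have hrp : r < p := lt_of_mul_lt_mul_right (by linarith) hn.le
  refine false_of_normalized_bounds (t := t) (μ := μ) (z := z) ?_ hr hrp ?_ hz2
    ?_ ?_ ?_ ?_ ?_ ?_ ?_
  · exact mul_right_cancel₀ hθ0.ne' (by linarith)
  · exact le_of_mul_le_mul_right (by linarith) hq
  · exact lt_of_mul_lt_mul_left (by linarith) hn.le
  · exact lt_of_mul_lt_mul_left (a := θ0 * (θ0 * q)) (by linarith) (by positivity)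
  · exact lt_of_mul_lt_mul_left (by linarith) hn.le
  · exact lt_of_mul_lt_mul_left (by linarith) hn.le
  · have hlp : l * p = r * μ := mul_right_cancel₀ hn.ne' (by linarith)
    have hlp' : l * p * (θ0 * q * (1 - μ)) = r * μ * (θ0 * q * (1 - μ)) := by rw [hlp]
    exact lt_of_mul_lt_mul_left
      (by linarith [mul_lt_mul_of_pos_left h5 (hr.trans hrp)]) hn.le
  · exact fun hz => lt_of_mul_lt_mul_left (by linarith [h6 hz]) hn.le
  · exact fun hz => lt_of_mul_lt_mul_left (by linarith [h7 hz]) hn.le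

theorem seven_tenths_welfare_le_of_le_half (hmono : MonotoneOn f (Icc 0 1))
    (hconc : ConcaveOn ℝ (Icc 0 1) f) (h0 : f 0 = 0) {θ0 θ1 θ2 cH M : ℝ}
    (hθ : θ1 + θ2 = 2 * θ0) (hθ1 : 0 < θ1) (h12 : θ1 ≤ θ2) (hc : 0 < cH)
    (hC1 : θ0 * f 1 ≤ M) (hC2 : θ0 * (2 * f (1/2)) - θ0 / θ2 * cH ≤ M)
    (hC3 : ∀ x ∈ Icc (0:ℝ) (1/2), x * cH ≤ θ1 * (f x + f (1 - x)) →
      θ0 * (f x + f (1 - x)) - x * cH ≤ M)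
    (hC4 : ∀ x ∈ Icc (0:ℝ) (1/2), 1/2 * θ2 * (f x + f (1/2 - x)) - x * cH ≤ M)
    (hz : z ∈ Icc (0:ℝ) (1/2)) :
    7/10 * (θ0 * (f z + f (1 - z)) - z * cH) ≤ M := by
  have hθ0 : 0 < θ0 := by linarith
  have hθ2 : 0 < θ2 := by linarith
  have hz01 : z ∈ Icc (0:ℝ) 1 := ⟨hz.1, by linarith [hz.2]⟩
  have hf1 : 0 ≤ f 1 := h0 ▸ hmono (left_mem_Icc.2 zero_le_one) (right_mem_Icc.2 zero_le_one)
    zero_le_one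
  have hq1 : f 1 ≤ f z + f (1 - z) := by linarith [hconc.map_zero_add_map_one_le hz01]
  set q := f z + f (1 - z)
  rcases le_or_gt (θ0 * q - z * cH) 0 with hW | hW
  · linarith [mul_nonneg hθ0.le hf1]
  rcases le_or_gt (z * cH) (θ1 * q) with hfeas | hinf
  · linarith [hC3 z hz hfeas]
  by_contra! hM
  have hz0 : 0 < z :=
    pos_of_mul_pos_left ((mul_nonneg hθ1.le (hf1.trans hq1)).trans_lt hinf) hc.le
  have hqh : q ≤ 2 * f (1/2) := hconc.add_map_one_sub_le hz01
  obtain ⟨l, hl, hlz, hfeas', hQx⟩ := exists_binding_point hconc h0 hθ1.le hc hz0 hz01.2 hf1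
    (by linarith [mul_le_mul_of_nonneg_left hq1 hθ1.le])
  have hx : l * z ∈ Icc (0:ℝ) (1/2) :=
    ⟨mul_nonneg hl.1 hz.1, (mul_le_of_le_one_left hz.1 hl.2).trans hz.2⟩
  refine false_of_candidate_bounds (θ1 := θ1) (θ2 := θ2) (z := z) (q := q) (U := f 1) hθ hθ1
    h12 hz.2 (add_le_two_mul_map_one hmono hz01 ⟨by linarith [hz01.2], by linarith [hz.1]⟩)
    hinf (sub_pos.1 hW) (hC1.trans_lt hM) ?_ ?_ ?_ ?_ hlz ?_ ?_
  · have h : θ0 * q - 7/10 * (θ0 * q - z * cH) < θ0 / θ2 * cH := by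
      linarith [hC2.trans_lt hM, mul_le_mul_of_nonneg_left hqh hθ0.le]
    calc θ2 * z * (θ0 * q - 7/10 * (θ0 * q - z * cH)) < θ2 * z * (θ0 / θ2 * cH) :=
          mul_lt_mul_of_pos_left h (mul_pos hθ2 hz0)
      _ = θ0 * (z * cH) := by field_simp
  · have h := (hC4 0 ⟨le_rfl, by norm_num⟩).trans_lt hM
    rw [h0, zero_add, zero_mul, sub_zero] at h
    linarith [mul_le_mul_of_nonneg_left hqh hθ2.le]
  · have h' : (q - f 1) + (1 - 2 * z) * q / 2 ≤ f z + f (1/2 - z) := by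
      linarith [content_sub_add_le_half_content hmono hconc h0.ge hz,
        mul_le_mul_of_nonneg_left hqh (by linarith [hz.2] : (0:ℝ) ≤ 1 - 2 * z)]
    linarith [(hC4 z hz).trans_lt hM, mul_le_mul_of_nonneg_left h' (by linarith : (0:ℝ) ≤ θ2 / 2)]
  · linarith [(hC3 _ hx hfeas').trans_lt hM, mul_le_mul_of_nonneg_left hQx hθ0.le]
  · intro hz4
    linarith [(hC4 z hz).trans_lt hM,
      mul_le_mul_of_nonneg_left (two_mul_content_sub_le_half_content hmono hz.1 hz4) hθ2.le]
  · intro hz4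
    linarith [mul_lt_mul_of_pos_right ((hC4 z hz).trans_lt hM) hz0,
      mul_le_mul_of_nonneg_left (content_sub_le_mul_half_content hmono hconc h0.ge hz4 hz.2)
        hθ2.le]

end CombinedMechanism

/-- Combined mechanism, PoA ≥ 0.7: With `Q1` nondecreasing and
concave on `[0,1]`, `Q1(0) = 0`, types `0 < θ1 ≤ θ2`, `θ0 = (θ1+θ2)/2`,
`c_H > 0`, and candidate welfares `C1 = θ0·Q1(1)`,
`C2 = θ0·(2Q1(1/2)) − (θ0/θ2)·c_H`,
`C3 = sup {θ0·Q(x,1) − x·c_H : x ∈ [0,1/2], θ1·Q(x,1) ≥ x·c_H}`,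
`C4 = sup_{x ∈ [0,1/2]} ((1/2)·θ2·Q(x,1/2) − x·c_H)`, it holds that
`max{C1,C2,C3,C4} ≥ 0.7 · sup_{x ∈ [0,1]} (θ0·Q(x,1) − x·c_H)`;
i.e. the combined mechanism achieves `PoA_ag ≥ 0.7`. -/
theorem stmt_13 (Q1 : ℝ → ℝ) (hmono : MonotoneOn Q1 (Set.Icc 0 1))
    (hconc : ConcaveOn ℝ (Set.Icc 0 1) Q1) (h0 : Q1 0 = 0)
    (θ1 θ2 cH : ℝ) (hθ1 : 0 < θ1) (h12 : θ1 ≤ θ2) (hc : 0 < cH) :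
    let θ0 := (θ1 + θ2) / 2
    let Q : ℝ → ℝ := fun x => Q1 x + Q1 (1 - x)
    let Qh : ℝ → ℝ := fun x => Q1 x + Q1 (1 / 2 - x)
    let C1 := θ0 * Q1 1
    let C2 := θ0 * (2 * Q1 (1 / 2)) - (θ0 / θ2) * cH
    let C3 := sSup {w : ℝ | ∃ x ∈ Set.Icc (0 : ℝ) (1 / 2),
      x * cH ≤ θ1 * Q x ∧ w = θ0 * Q x - x * cH}
    let C4 := sSup {w : ℝ | ∃ x ∈ Set.Icc (0 : ℝ) (1 / 2),
      w = (1 / 2) * θ2 * Qh x - x * cH}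
    (0.7 : ℝ) * sSup {w : ℝ | ∃ x ∈ Set.Icc (0 : ℝ) 1, w = θ0 * Q x - x * cH} ≤
      max (max C1 C2) (max C3 C4) := by
  intro θ0 Q Qh C1 C2 C3 C4
  have hθ0 : 0 < θ0 := by simp only [θ0]; linarith
  have hbdd3 : BddAbove {w : ℝ | ∃ x ∈ Icc (0 : ℝ) (1 / 2),
      x * cH ≤ θ1 * Q x ∧ w = θ0 * Q x - x * cH} := by
    refine ⟨θ0 * (2 * Q1 (1 / 2)), ?_⟩
    rintro _ ⟨x, hx, -, rfl⟩
    linarith [mul_le_mul_of_nonneg_left (hconc.add_map_one_sub_le ⟨hx.1, by linarith [hx.2]⟩)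
      hθ0.le, mul_nonneg hx.1 hc.le]
  have hbdd4 : BddAbove {w : ℝ | ∃ x ∈ Icc (0 : ℝ) (1 / 2),
      w = (1 / 2) * θ2 * Qh x - x * cH} := by
    refine ⟨1 / 2 * θ2 * (2 * Q1 1), ?_⟩
    rintro _ ⟨x, hx, rfl⟩
    have h := CombinedMechanism.add_le_two_mul_map_one (y := 1 / 2 - x) hmono
      ⟨hx.1, by linarith [hx.2]⟩ ⟨by linarith [hx.2], by linarith [hx.1]⟩
    linarith [mul_le_mul_of_nonneg_left h (by linarith : (0:ℝ) ≤ 1 / 2 * θ2),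
      mul_nonneg hx.1 hc.le]
  have key (x) (hx : x ∈ Icc (0:ℝ) (1/2)) :
      7/10 * (θ0 * Q x - x * cH) ≤ max (max C1 C2) (max C3 C4) :=
    CombinedMechanism.seven_tenths_welfare_le_of_le_half hmono hconc h0 (by ring) hθ1 h12 hc
      (le_max_of_le_left (le_max_left _ _)) (le_max_of_le_left (le_max_right _ _))
      (fun y hy hfeas => (le_csSup hbdd3 ⟨y, hy, hfeas, rfl⟩).trans
        (le_max_of_le_right (le_max_left _ _)))
      (fun y hy => (le_csSup hbdd4 ⟨y, hy, rfl⟩).trans (le_max_of_le_right (le_max_right _ _)))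
      hx
  have hsup : sSup {w : ℝ | ∃ x ∈ Icc (0 : ℝ) 1, w = θ0 * Q x - x * cH}
      ≤ 10 / 7 * max (max C1 C2) (max C3 C4) := by
    refine csSup_le ⟨_, 0, left_mem_Icc.2 zero_le_one, rfl⟩ ?_
    rintro _ ⟨x, hx, rfl⟩
    rcases le_or_gt x (1/2) with hx2 | hx2
    · linarith [key x ⟨hx.1, hx2⟩]
    · have h := key (1 - x) ⟨by linarith [hx.2], by linarith⟩
      rw [show Q (1 - x) = Q x by simp only [Q, sub_sub_cancel, add_comm]] at h
      linarith [mul_le_mul_of_nonneg_right (by linarith : 1 - x ≤ x) hc.le]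
  rw [show (0.7 : ℝ) = 7 / 10 by norm_num]
  linarith
end

section
/- (Proposition 5, K-path model) Let K ≥ 2, c_H > 0, and path costs c_k = ((k−1)/(K−1))·c_H for k = 1,…,K; let Q0 ≥ 0, θ0 > 0, and let Q1 : [0,1] → ℝ be nondecreasing with Q1(0) ≥ 0. For a feasible flow (x_1,…,x_K) with x_k ≥ 0 and x_1+⋯+x_K = 1, the payoff on path k is θ0·(Q0 + Σ_j Q1(x_j)) − c_k. Then: (i) the flow with x_1 = 1 and x_k = 0 for k ≥ 2 is the unique equilibrium; (ii) its social welfare satisfies θ0·(Q0 + Q1(1)) ≥ (1/K)·(θ0·(Q0 + Σ_{k=1}^K Q1(x_k)) − Σ_{k=1}^K c_k·x_k) for every feasible flow, i.e., the price of anarchy of the K-path content routing game without incentive design is at least 1/K. -/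
/-!
Every user enjoys the same total content, so payoffs on different paths differ only by the path
costs. Hence a user sits on path `i` in equilibrium only if `c i` is minimal; since the free path
`0` is the unique cheapest one, all mass must sit on it, and that flow is an equilibrium.
For the welfare bound, each of the `K` terms `Q1 (x k)` is at most `Q1 1` because `x k ≤ 1`,
and the costs only lower the welfare of the competing flow.
-/

open Finset

namespace ContentRouting

variable {ι : Type*} [Fintype ι]

def IsFeasible (x : ι → ℝ) : Prop := (∀ k, 0 ≤ x k) ∧ ∑ k, x k = 1

def IsEquilibrium (W : (ι → ℝ) → ℝ) (c : ι → ℝ) (x : ι → ℝ) : Prop :=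
  IsFeasible x ∧ ∀ i j, 0 < x i → W x - c j ≤ W x - c i

def pointFlow [DecidableEq ι] (i₀ : ι) : ι → ℝ := fun k => if k = i₀ then 1 else 0

theorem IsFeasible.le_one {x : ι → ℝ} (hx : IsFeasible x) (k : ι) : x k ≤ 1 :=
  hx.2 ▸ single_le_sum (fun i _ => hx.1 i) (mem_univ k)

section PointFlow

variable [DecidableEq ι]

theorem isFeasible_pointFlow (i₀ : ι) : IsFeasible (pointFlow i₀) :=
  ⟨fun k => by unfold pointFlow; split_ifs <;> norm_num, by simp [pointFlow]⟩

theorem IsFeasible.eq_pointFlow {x : ι → ℝ} {i₀ : ι} (hx : IsFeasible x)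
    (hzero : ∀ i ≠ i₀, x i = 0) : x = pointFlow i₀ := by
  have hsum : ∑ k, x k = x i₀ := sum_eq_single i₀ (fun i _ hi => hzero i hi) (by simp)
  funext k
  by_cases hk : k = i₀
  · subst hk
    simpa [pointFlow, hsum] using hx.2
  · simp [pointFlow, hk, hzero k hk]

theorem isEquilibrium_pointFlow (W : (ι → ℝ) → ℝ) {c : ι → ℝ} {i₀ : ι}
    (hmin : ∀ j, c i₀ ≤ c j) : IsEquilibrium W c (pointFlow i₀) := by
  refine ⟨isFeasible_pointFlow i₀, fun i j hi => ?_⟩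
  have hi₀ : i = i₀ := by
    by_contra h
    simp [pointFlow, h] at hi
  subst hi₀
  linarith [hmin j]

theorem IsEquilibrium.eq_pointFlow {W : (ι → ℝ) → ℝ} {c : ι → ℝ} {x : ι → ℝ} {i₀ : ι}
    (hx : IsEquilibrium W c x) (hmin : ∀ i ≠ i₀, c i₀ < c i) : x = pointFlow i₀ := by
  refine hx.1.eq_pointFlow fun i hi => ?_
  by_contra hxi
  have hpos : 0 < x i := lt_of_le_of_ne (hx.1.1 i) (Ne.symm hxi)
  linarith [hx.2 i i₀ hpos, hmin i hi]

end PointFlow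

theorem IsFeasible.welfare_le {x : ι → ℝ} (hx : IsFeasible x) {c : ι → ℝ} (hc : ∀ k, 0 ≤ c k)
    {θ₀ Q₀ : ℝ} (hθ : 0 ≤ θ₀) (hQ₀ : 0 ≤ Q₀) {Q₁ : ℝ → ℝ} (hmono : MonotoneOn Q₁ (Set.Icc 0 1)) :
    1 / (Fintype.card ι : ℝ) * (θ₀ * (Q₀ + ∑ k, Q₁ (x k)) - ∑ k, c k * x k) ≤
      θ₀ * (Q₀ + Q₁ 1) := by
  have hQ : ∑ k, Q₁ (x k) ≤ Fintype.card ι * Q₁ 1 := by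
    calc ∑ k, Q₁ (x k) ≤ ∑ _k : ι, Q₁ 1 := sum_le_sum fun k _ =>
          hmono ⟨hx.1 k, hx.le_one k⟩ ⟨zero_le_one, le_rfl⟩ (hx.le_one k)
      _ = Fintype.card ι * Q₁ 1 := by rw [sum_const, card_univ, nsmul_eq_mul]
  have hcost : 0 ≤ ∑ k, c k * x k := sum_nonneg fun k _ => mul_nonneg (hc k) (hx.1 k)
  have hcard : (1 : ℝ) ≤ Fintype.card ι := by
    obtain ⟨k⟩ : Nonempty ι := by
      by_contra h
      simpa [not_nonempty_iff.mp h] using hx.2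
    exact_mod_cast Fintype.card_pos_iff.mpr ⟨k⟩
  rw [one_div, inv_mul_le_iff₀ (by linarith)]
  nlinarith [mul_le_mul_of_nonneg_left hQ hθ, mul_nonneg hθ hQ₀]

end ContentRouting

open ContentRouting

/-- The paper's `c_k = (k - 1) / (K - 1) · c_H`, with paths indexed from `0`. -/
noncomputable def pathCost (K : ℕ) (cH : ℝ) (k : Fin K) : ℝ := ((k : ℕ) : ℝ) / ((K : ℝ) - 1) * cH

theorem pathCost_nonneg {K : ℕ} {cH : ℝ} (hc : 0 ≤ cH) (k : Fin K) : 0 ≤ pathCost K cH k := by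
  have : (1 : ℝ) ≤ K := by exact_mod_cast k.pos
  unfold pathCost
  exact mul_nonneg (div_nonneg (Nat.cast_nonneg _) (by linarith)) hc

theorem pathCost_pos {K : ℕ} {cH : ℝ} (hc : 0 < cH) {k : Fin K} (hk : (k : ℕ) ≠ 0) :
    0 < pathCost K cH k := by
  have : (k : ℝ) + 1 ≤ K := by exact_mod_cast k.isLt
  have : (1 : ℝ) ≤ k := by exact_mod_cast Nat.one_le_iff_ne_zero.mpr hk
  unfold pathCost
  exact mul_pos (div_pos (by linarith) (by linarith)) hc

/-- Proposition 5, K-path model: With `K ≥ 2` parallel paths of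
costs `c_k = ((k−1)/(K−1))·c_H` (0-indexed here: `c i = (i/(K−1))·c_H`),
common-link content `Q0 ≥ 0`, valuation `θ0 > 0` and nondecreasing `Q1` with
`Q1(0) ≥ 0`: (i) the flow putting all mass on the free path is the unique
equilibrium; (ii) its welfare `θ0·(Q0 + Q1(1))` is at least `1/K` times the
welfare of any feasible flow, i.e. the PoA without incentives is ≥ `1/K`. -/
theorem stmt_14 (K : ℕ) (hK : 2 ≤ K) (cH Q0 θ0 : ℝ) (hc : 0 < cH)
    (hQ0 : 0 ≤ Q0) (hθ : 0 < θ0) (Q1 : ℝ → ℝ)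
    (hmono : MonotoneOn Q1 (Set.Icc 0 1)) :
    let c : Fin K → ℝ := fun k => ((k : ℕ) : ℝ) / ((K : ℝ) - 1) * cH
    let payoff : (Fin K → ℝ) → Fin K → ℝ :=
      fun x k => θ0 * (Q0 + ∑ j, Q1 (x j)) - c k
    let feasible : (Fin K → ℝ) → Prop := fun x => (∀ k, 0 ≤ x k) ∧ ∑ k, x k = 1
    let eqm : (Fin K → ℝ) → Prop := fun x => feasible x ∧
      ∀ i j, 0 < x i → payoff x j ≤ payoff x i
    let i0 : Fin K := ⟨0, by omega⟩
    let x0 : Fin K → ℝ := fun k => if k = i0 then 1 else 0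
    eqm x0 ∧ (∀ x, eqm x → x = x0) ∧
    (∀ x, feasible x →
      (1 / (K : ℝ)) * (θ0 * (Q0 + ∑ k, Q1 (x k)) - ∑ k, c k * x k) ≤
        θ0 * (Q0 + Q1 1)) := by
  intro c payoff feasible eqm i0 x0
  have hfree : pathCost K cH i0 = 0 := by simp [pathCost, i0]
  have hle : ∀ j, pathCost K cH i0 ≤ pathCost K cH j := fun j =>
    hfree ▸ pathCost_nonneg hc.le j
  have hlt : ∀ i ≠ i0, pathCost K cH i0 < pathCost K cH i := fun i hi =>
    hfree ▸ pathCost_pos hc fun h => hi (Fin.ext h)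
  let W : (Fin K → ℝ) → ℝ := fun x => θ0 * (Q0 + ∑ j, Q1 (x j))
  refine ⟨isEquilibrium_pointFlow W hle, fun x hx => IsEquilibrium.eq_pointFlow (W := W) hx hlt,
    fun x hx => ?_⟩
  have := IsFeasible.welfare_le hx (pathCost_nonneg hc.le) hθ.le hQ0 hmono
  rwa [Fintype.card_fin] at this
end

section
/- (Dynamic model, stationary social optimum) Let N > 0, γ ∈ (0,1), r ∈ (0,1), and define f(x) = (1−γ)·N·ln r·( r^{1−x}/(1 − γ·r^{1−x}) − r^x/(1 − γ·r^x) ) for x ∈ [0,1]. Then f is strictly decreasing on [0,1], f(1/2) = 0, and f(0) = (r−1)·N·ln r/(1−γr) > 0. Consequently, for c_H > 0: if (r−1)·N·ln r/(1−γr) ≤ 4·c_H, then f(x) < 4·c_H for all x ∈ (0,1/2], so the stationary optimal flow on the high-cost path is x* = 0; otherwise the equation f(x) = 4·c_H has a unique solution x* ∈ (0,1/2). -/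
/-!
Write `g t = r ^ t / (1 - γ r ^ t)`, so that `f x = C (g (1 - x) - g x)` with
`C = (1 - γ) N log r < 0`. Since `t ↦ r ^ t` is decreasing and `u ↦ u / (1 - γ u)` is increasing
where `γ u < 1`, `g` is decreasing on `[0, ∞)`; hence `f` is strictly decreasing on `[0, 1]`,
and it vanishes at the fixed point `1/2` of `x ↦ 1 - x`. The intermediate value theorem on
`[0, 1/2]` gives a root of `f x = 4 c_H` when `4 c_H < f 0`, unique by strict monotonicity.
-/

open Real Set

lemma strictMonoOn_div_one_sub_mul (γ : ℝ) :
    StrictMonoOn (fun u : ℝ => u / (1 - γ * u)) {u | γ * u < 1} := by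
  intro u hu v hv huv
  have hu' : 0 < 1 - γ * u := sub_pos.mpr hu
  have hv' : 0 < 1 - γ * v := sub_pos.mpr hv
  rw [div_lt_div_iff₀ hu' hv']
  linarith

lemma mul_rpow_lt_one {γ r t : ℝ} (hr0 : 0 < r) (hr1 : r ≤ 1) (hγ : γ < 1) (ht : 0 ≤ t) :
    γ * r ^ t < 1 := by
  have hpos : 0 < r ^ t := rpow_pos_of_pos hr0 t
  have hle : r ^ t ≤ 1 := rpow_le_one hr0.le hr1 ht
  nlinarith

lemma strictAntiOn_rpow_div_one_sub_mul_rpow {γ r : ℝ} (hr0 : 0 < r) (hr1 : r < 1)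
    (hγ : γ < 1) :
    StrictAntiOn (fun t : ℝ => r ^ t / (1 - γ * r ^ t)) (Ici 0) := by
  intro s hs t _ hst
  exact strictMonoOn_div_one_sub_mul γ (mul_rpow_lt_one hr0 hr1.le hγ (hs.trans hst.le))
    (mul_rpow_lt_one hr0 hr1.le hγ hs) (rpow_lt_rpow_of_exponent_gt hr0 hr1 hst)

lemma continuousOn_rpow_div_one_sub_mul_rpow {γ r : ℝ} (hr0 : 0 < r) (hr1 : r ≤ 1)
    (hγ : γ < 1) :
    ContinuousOn (fun t : ℝ => r ^ t / (1 - γ * r ^ t)) (Ici 0) := by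
  have hrpow : Continuous fun t : ℝ => r ^ t :=
    continuous_const.rpow continuous_id fun _ => Or.inl hr0.ne'
  refine hrpow.continuousOn.div (continuous_const.sub (continuous_const.mul hrpow)).continuousOn ?_
  exact fun t ht => (sub_pos.mpr (mul_rpow_lt_one hr0 hr1 hγ ht)).ne'

theorem StrictAntiOn.existsUnique_eq_of_mem_Ioo {f : ℝ → ℝ} {a b c : ℝ} (hab : a ≤ b)
    (hf : StrictAntiOn f (Icc a b)) (hcont : ContinuousOn f (Icc a b))
    (hc : c ∈ Ioo (f b) (f a)) :
    ∃! x, x ∈ Ioo a b ∧ f x = c := by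
  obtain ⟨x, hx, hfx⟩ := intermediate_value_Ioo' hab hcont hc
  exact ⟨x, ⟨hx, hfx⟩, fun y hy =>
    hf.injOn (Ioo_subset_Icc_self hy.1) (Ioo_subset_Icc_self hx) (hy.2.trans hfx.symm)⟩

noncomputable def marginalWelfare (N γ r x : ℝ) : ℝ :=
  (1 - γ) * N * Real.log r * (r ^ (1 - x) / (1 - γ * r ^ (1 - x)) - r ^ x / (1 - γ * r ^ x))

section

variable {N γ r : ℝ}

lemma marginalWelfare_strictAntiOn (hN : 0 < N) (hγ : γ < 1) (hr0 : 0 < r) (hr1 : r < 1) :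
    StrictAntiOn (marginalWelfare N γ r) (Icc 0 1) := by
  have hC : (1 - γ) * N * Real.log r < 0 :=
    mul_neg_of_pos_of_neg (mul_pos (sub_pos.mpr hγ) hN) (log_neg hr0 hr1)
  have hg := strictAntiOn_rpow_div_one_sub_mul_rpow hr0 hr1 hγ
  intro x hx y hy hxy
  have hgx := hg (show (0 : ℝ) ≤ x from hx.1) (show (0 : ℝ) ≤ y from hy.1) hxy
  have hgReflect := hg (show 0 ≤ 1 - y by linarith [hy.2]) (show 0 ≤ 1 - x by linarith [hx.2])
    (by linarith)
  unfold marginalWelfare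
  exact mul_lt_mul_of_neg_left (by simp only at hgx hgReflect; linarith) hC

lemma marginalWelfare_half : marginalWelfare N γ r (1 / 2) = 0 := by
  norm_num [marginalWelfare]

lemma marginalWelfare_zero (hγ : γ ≠ 1) (hγr : γ * r ≠ 1) :
    marginalWelfare N γ r 0 = (r - 1) * N * Real.log r / (1 - γ * r) := by
  have h1 : 1 - γ ≠ 0 := sub_ne_zero.mpr hγ.symm
  have h2 : 1 - γ * r ≠ 0 := sub_ne_zero.mpr hγr.symm
  simp only [marginalWelfare, sub_zero, rpow_one, rpow_zero, mul_one]
  field_simp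
  ring

lemma continuousOn_marginalWelfare (hγ : γ < 1) (hr0 : 0 < r) (hr1 : r ≤ 1) :
    ContinuousOn (marginalWelfare N γ r) (Icc 0 1) := by
  have hg := continuousOn_rpow_div_one_sub_mul_rpow hr0 hr1 hγ
  have hreflect : MapsTo (fun x : ℝ => 1 - x) (Icc 0 1) (Ici 0) := fun x hx => by
    simp only [mem_Ici, sub_nonneg]; exact hx.2
  exact continuousOn_const.mul ((hg.comp (continuousOn_const.sub continuousOn_id) hreflect).sub
    (hg.mono Icc_subset_Ici_self))

end

/-- Dynamic model, stationary social optimum: For `N > 0`,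
`γ, r ∈ (0,1)` and
`f(x) = (1−γ)·N·ln r·(r^(1−x)/(1−γr^(1−x)) − r^x/(1−γr^x))`:
`f` is strictly decreasing on `[0,1]`, `f(1/2) = 0`,
`f(0) = (r−1)·N·ln r/(1−γr) > 0`; consequently for `c_H > 0`, if
`f(0) ≤ 4c_H` then `f(x) < 4c_H` on `(0,1/2]` (so the stationary optimal flow
is `x* = 0`), and otherwise `f(x) = 4c_H` has a unique solution in
`(0,1/2)`. -/
theorem stmt_17 (N γ r : ℝ) (hN : 0 < N) (hγ : γ ∈ Set.Ioo (0 : ℝ) 1)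
    (hr : r ∈ Set.Ioo (0 : ℝ) 1) :
    let f : ℝ → ℝ := fun x =>
      (1 - γ) * N * Real.log r *
        (r ^ (1 - x) / (1 - γ * r ^ (1 - x)) - r ^ x / (1 - γ * r ^ x))
    StrictAntiOn f (Set.Icc 0 1) ∧
    f (1 / 2) = 0 ∧
    (f 0 = (r - 1) * N * Real.log r / (1 - γ * r) ∧ 0 < f 0) ∧
    ∀ cH : ℝ, 0 < cH →
      ((r - 1) * N * Real.log r / (1 - γ * r) ≤ 4 * cH →
        ∀ x ∈ Set.Ioc (0 : ℝ) (1 / 2), f x < 4 * cH) ∧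
      (4 * cH < (r - 1) * N * Real.log r / (1 - γ * r) →
        ∃! x, x ∈ Set.Ioo (0 : ℝ) (1 / 2) ∧ f x = 4 * cH) := by
  obtain ⟨-, hγ1⟩ := hγ
  obtain ⟨hr0, hr1⟩ := hr
  intro f
  have hf : f = marginalWelfare N γ r := rfl
  rw [hf]
  have hanti := marginalWelfare_strictAntiOn hN hγ1 hr0 hr1
  have hγr : γ * r < 1 := by nlinarith
  have hzero := marginalWelfare_zero (N := N) hγ1.ne hγr.ne
  have hpos : 0 < (r - 1) * N * Real.log r / (1 - γ * r) :=
    div_pos (mul_pos_of_neg_of_neg (mul_neg_of_neg_of_pos (sub_neg.mpr hr1) hN) (log_neg hr0 hr1))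
      (sub_pos.mpr hγr)
  have hhalf : Icc (0 : ℝ) (1 / 2) ⊆ Icc 0 1 := Icc_subset_Icc_right (by norm_num)
  refine ⟨hanti, marginalWelfare_half, ⟨hzero, hzero ▸ hpos⟩,
    fun cH hcH => ⟨fun hle x hx => ?_, fun hlt => ?_⟩⟩
  · calc marginalWelfare N γ r x < marginalWelfare N γ r 0 :=
          hanti (left_mem_Icc.mpr zero_le_one) (hhalf (Ioc_subset_Icc_self hx)) hx.1
      _ ≤ 4 * cH := hzero ▸ hle
  · refine (hanti.mono hhalf).existsUnique_eq_of_mem_Ioo (by norm_num)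
      ((continuousOn_marginalWelfare hγ1 hr0 hr1.le).mono hhalf) ⟨?_, hzero ▸ hlt⟩
    rw [marginalWelfare_half]; linarith
end

section
/- (Dynamic model, content-restriction threshold) Let N > 0, γ ∈ (0,1), r ∈ (0,1). Then N(1−√r)/(2(1−γ√r)) − N(1−r)/(4(1−γr)) = N·(1+γ√r)·(1−√r)² / (4·(1−γ√r)·(1−γr)). Consequently, for c_H > 0, the stationary perfect-path-diversity welfare N(1−√r)/(2(1−γ√r)) − c_H strictly exceeds the stationary no-incentive welfare N(1−r)/(4(1−γr)) if and only if c_H < N·(1+γ√r)·(1−√r)² / (4·(1−γ√r)·(1−γr)). -/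
/-! Writing `s = √r`, so that `r = s²`, both welfares are rational functions of `s`; over the
common denominator `4(1 - γs)(1 - γs²)` the numerator of their difference factors as
`N(1 - s)²(1 + γs)`. The threshold for `c_H` is exactly this difference. -/

lemma one_sub_mul_pos_of_le_one {γ x : ℝ} (hγ₀ : 0 ≤ γ) (hγ₁ : γ < 1) (hx : x ≤ 1) :
    0 < 1 - γ * x := by
  nlinarith

lemma welfare_sub_eq (N γ s : ℝ) (hs : 1 - γ * s ≠ 0) (hs₂ : 1 - γ * s ^ 2 ≠ 0) :
    N * (1 - s) / (2 * (1 - γ * s)) - N * (1 - s ^ 2) / (4 * (1 - γ * s ^ 2)) =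
      N * (1 + γ * s) * (1 - s) ^ 2 / (4 * (1 - γ * s) * (1 - γ * s ^ 2)) := by
  have h₂ : (2 : ℝ) * (1 - γ * s) ≠ 0 := mul_ne_zero two_ne_zero hs
  have h₄ : (4 : ℝ) * (1 - γ * s ^ 2) ≠ 0 := mul_ne_zero four_ne_zero hs₂
  rw [div_sub_div _ _ h₂ h₄,
    div_eq_div_iff (mul_ne_zero h₂ h₄) (mul_ne_zero (mul_ne_zero four_ne_zero hs) hs₂)]
  ring

theorem stmt_18_general (N γ r : ℝ) (hγ : γ ∈ Set.Ioo (0 : ℝ) 1)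
    (hr : r ∈ Set.Ioo (0 : ℝ) 1) :
    (N * (1 - Real.sqrt r) / (2 * (1 - γ * Real.sqrt r)) -
        N * (1 - r) / (4 * (1 - γ * r)) =
      N * (1 + γ * Real.sqrt r) * (1 - Real.sqrt r) ^ 2 /
        (4 * (1 - γ * Real.sqrt r) * (1 - γ * r))) ∧
    ∀ cH : ℝ, 0 < cH →
      (N * (1 - r) / (4 * (1 - γ * r)) <
          N * (1 - Real.sqrt r) / (2 * (1 - γ * Real.sqrt r)) - cH ↔
        cH < N * (1 + γ * Real.sqrt r) * (1 - Real.sqrt r) ^ 2 /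
          (4 * (1 - γ * Real.sqrt r) * (1 - γ * r))) := by
  obtain ⟨hγ₀, hγ₁⟩ := hγ
  obtain ⟨hr₀, hr₁⟩ := hr
  have hsq : Real.sqrt r ^ 2 = r := Real.sq_sqrt hr₀.le
  have hs₁ : Real.sqrt r ≤ 1 := Real.sqrt_le_one.mpr hr₁.le
  have gap := welfare_sub_eq N γ (Real.sqrt r)
    (one_sub_mul_pos_of_le_one hγ₀.le hγ₁ hs₁).ne'
    (by rw [hsq]; exact (one_sub_mul_pos_of_le_one hγ₀.le hγ₁ hr₁.le).ne')
  rw [hsq] at gap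
  exact ⟨gap, fun cH _ => by rw [lt_sub_comm, gap]⟩

/-- Dynamic model, content-restriction threshold: For `N > 0`
and `γ, r ∈ (0,1)`,
`N(1−√r)/(2(1−γ√r)) − N(1−r)/(4(1−γr)) = N(1+γ√r)(1−√r)²/(4(1−γ√r)(1−γr))`;
consequently, for `c_H > 0`, the stationary perfect-path-diversity welfare
`N(1−√r)/(2(1−γ√r)) − c_H` strictly exceeds the stationary no-incentive
welfare `N(1−r)/(4(1−γr))` iff
`c_H < N(1+γ√r)(1−√r)²/(4(1−γ√r)(1−γr))`. -/
theorem stmt_18 (N γ r : ℝ) (hN : 0 < N) (hγ : γ ∈ Set.Ioo (0 : ℝ) 1)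
    (hr : r ∈ Set.Ioo (0 : ℝ) 1) :
    (N * (1 - Real.sqrt r) / (2 * (1 - γ * Real.sqrt r)) -
        N * (1 - r) / (4 * (1 - γ * r)) =
      N * (1 + γ * Real.sqrt r) * (1 - Real.sqrt r) ^ 2 /
        (4 * (1 - γ * Real.sqrt r) * (1 - γ * r))) ∧
    ∀ cH : ℝ, 0 < cH →
      (N * (1 - r) / (4 * (1 - γ * r)) <
          N * (1 - Real.sqrt r) / (2 * (1 - γ * Real.sqrt r)) - cH ↔
        cH < N * (1 + γ * Real.sqrt r) * (1 - Real.sqrt r) ^ 2 /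
          (4 * (1 - γ * Real.sqrt r) * (1 - γ * r))) :=
  stmt_18_general N γ r hγ hr
end

section
/- (Appendix A, unique critical cost difference) Let b_H > 0, b_L > 0, θ0 > 0, and let Q1 : [0,1] → ℝ be differentiable with strictly decreasing derivative Q1′ (strict concavity). Define F(Δ) = θ0·Q1′((b_L−Δ)/(b_H+b_L)) − θ0·Q1′((b_H+Δ)/(b_H+b_L)) + Δ for Δ ∈ [−b_H, b_L]. Then F is strictly increasing on [−b_H, b_L], F(−b_H) = θ0·(Q1′(1) − Q1′(0)) − b_H < 0, and F(b_L) = θ0·(Q1′(0) − Q1′(1)) + b_L > 0; hence F has a unique zero Δã ∈ (−b_H, b_L). Moreover Δã > 0 if b_L > b_H, Δã = 0 if b_L = b_H, and Δã < 0 if b_L < b_H. -/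
/-!
Since `Q1'` is decreasing, both `Q1'`-terms of `F` are nondecreasing in `Δ`, and the summand `Δ`
makes `F` strictly increasing; at the endpoints the arguments of `Q1'` are `0` and `1`.
`Q1'` is only known to be a derivative, not to be continuous, so the zero is obtained from
Darboux's theorem: `F` is the derivative of
`Δ ↦ -(s θ0) Q1((b_L - Δ)/s) - (s θ0) Q1((b_H + Δ)/s) + Δ²/2` with `s = b_H + b_L`.
Finally `F 0 = θ0 (Q1'(b_L/s) - Q1'(b_H/s))`, and by monotonicity the zero has the sign of `-F 0`.
-/

open Set

/-- The function `F` of the statement, with `g` in place of `Q1'`. -/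
noncomputable def critGap (θ0 bH bL : ℝ) (g : ℝ → ℝ) (Δ : ℝ) : ℝ :=
  θ0 * g ((bL - Δ) / (bH + bL)) - θ0 * g ((bH + Δ) / (bH + bL)) + Δ

section CritGap

variable {θ0 bH bL : ℝ} {g : ℝ → ℝ}

lemma sub_div_add_mem_Icc (hs : 0 < bH + bL) {Δ : ℝ} (hΔ : Δ ∈ Icc (-bH) bL) :
    (bL - Δ) / (bH + bL) ∈ Icc (0 : ℝ) 1 :=
  ⟨div_nonneg (by linarith [hΔ.2]) hs.le, (div_le_one hs).2 (by linarith [hΔ.1])⟩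

lemma add_div_add_mem_Icc (hs : 0 < bH + bL) {Δ : ℝ} (hΔ : Δ ∈ Icc (-bH) bL) :
    (bH + Δ) / (bH + bL) ∈ Icc (0 : ℝ) 1 :=
  ⟨div_nonneg (by linarith [hΔ.1]) hs.le, (div_le_one hs).2 (by linarith [hΔ.2])⟩

lemma strictMonoOn_critGap (hs : 0 < bH + bL) (hθ : 0 ≤ θ0)
    (hg : AntitoneOn g (Icc 0 1)) : StrictMonoOn (critGap θ0 bH bL g) (Icc (-bH) bL) := by
  intro x hx y hy hxy
  have hL : g ((bL - x) / (bH + bL)) ≤ g ((bL - y) / (bH + bL)) :=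
    hg (sub_div_add_mem_Icc hs hy) (sub_div_add_mem_Icc hs hx) (by gcongr)
  have hH : g ((bH + y) / (bH + bL)) ≤ g ((bH + x) / (bH + bL)) :=
    hg (add_div_add_mem_Icc hs hx) (add_div_add_mem_Icc hs hy) (by gcongr)
  have := mul_le_mul_of_nonneg_left hL hθ
  have := mul_le_mul_of_nonneg_left hH hθ
  unfold critGap
  linarith

lemma critGap_neg_left (hs : bH + bL ≠ 0) :
    critGap θ0 bH bL g (-bH) = θ0 * (g 1 - g 0) - bH := by
  have h1 : (bL - -bH) / (bH + bL) = 1 := by rw [sub_neg_eq_add, add_comm, div_self hs]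
  simp only [critGap, h1, add_neg_cancel, zero_div]
  ring

lemma critGap_right (hs : bH + bL ≠ 0) :
    critGap θ0 bH bL g bL = θ0 * (g 0 - g 1) + bL := by
  simp only [critGap, sub_self, zero_div, div_self hs]
  ring

lemma critGap_zero :
    critGap θ0 bH bL g 0 = θ0 * (g (bL / (bH + bL)) - g (bH / (bH + bL))) := by
  simp only [critGap, sub_zero, add_zero]
  ring

lemma critGap_zero_neg_of_lt (hbH : 0 < bH) (hθ : 0 < θ0) (hg : StrictAntiOn g (Icc 0 1))
    (h : bH < bL) : critGap θ0 bH bL g 0 < 0 := by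
  have hs : 0 < bH + bL := by linarith
  have hzero : (0 : ℝ) ∈ Icc (-bH) bL := ⟨by linarith, by linarith⟩
  have hL := sub_div_add_mem_Icc hs hzero
  have hH := add_div_add_mem_Icc hs hzero
  rw [sub_zero] at hL
  rw [add_zero] at hH
  rw [critGap_zero]
  exact mul_neg_of_pos_of_neg hθ (sub_neg.2 (hg hH hL (by gcongr)))

lemma critGap_swap_zero : critGap θ0 bL bH g 0 = -critGap θ0 bH bL g 0 := by
  simp only [critGap_zero, add_comm bL bH]
  ring

lemma hasDerivAt_critGap_potential {Q1 : ℝ → ℝ} (hs : bH + bL ≠ 0) {x : ℝ}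
    (hL : HasDerivAt Q1 (g ((bL - x) / (bH + bL))) ((bL - x) / (bH + bL)))
    (hH : HasDerivAt Q1 (g ((bH + x) / (bH + bL))) ((bH + x) / (bH + bL))) :
    HasDerivAt (fun Δ => -((bH + bL) * θ0) * Q1 ((bL - Δ) / (bH + bL))
        - (bH + bL) * θ0 * Q1 ((bH + Δ) / (bH + bL)) + Δ ^ 2 / 2)
      (critGap θ0 bH bL g x) x := by
  have hL' := hL.comp x (((hasDerivAt_id x).const_sub bL).div_const (bH + bL))
  have hH' := hH.comp x (((hasDerivAt_id x).const_add bH).div_const (bH + bL))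
  have hsq : HasDerivAt (fun Δ : ℝ => Δ ^ 2 / 2) x x := by
    simpa using (hasDerivAt_pow 2 x).div_const 2
  refine (((hL'.const_mul _).sub (hH'.const_mul _)).add hsq).congr_deriv ?_
  unfold critGap
  field_simp

lemma exists_mem_Ioo_critGap_eq_zero {Q1 : ℝ → ℝ} (hs : 0 < bH + bL)
    (hderiv : ∀ x ∈ Icc (0 : ℝ) 1, HasDerivAt Q1 (g x) x)
    (hleft : critGap θ0 bH bL g (-bH) < 0) (hright : 0 < critGap θ0 bH bL g bL) :
    ∃ c ∈ Ioo (-bH) bL, critGap θ0 bH bL g c = 0 :=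
  exists_hasDerivWithinAt_eq_of_gt_of_lt (by linarith)
    (fun x hx => (hasDerivAt_critGap_potential hs.ne'
      (hderiv _ (sub_div_add_mem_Icc hs hx))
      (hderiv _ (add_div_add_mem_Icc hs hx))).hasDerivWithinAt) hleft hright

end CritGap

/-- Appendix A, unique critical cost difference: Let
`b_H, b_L > 0`, `θ0 > 0`, let `Q1` be differentiable on `[0,1]` with strictly
decreasing derivative `Q1'`, and let
`F(Δ) = θ0·Q1'((b_L−Δ)/(b_H+b_L)) − θ0·Q1'((b_H+Δ)/(b_H+b_L)) + Δ`.
Then `F` is strictly increasing on `[−b_H, b_L]`,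
`F(−b_H) = θ0·(Q1'(1) − Q1'(0)) − b_H < 0`,
`F(b_L) = θ0·(Q1'(0) − Q1'(1)) + b_L > 0`, `F` has a unique zero
`Δã ∈ (−b_H, b_L)`, and `Δã > 0` if `b_L > b_H`, `Δã = 0` if `b_L = b_H`,
`Δã < 0` if `b_L < b_H`. -/
theorem stmt_19 (bH bL θ0 : ℝ) (hbH : 0 < bH) (hbL : 0 < bL) (hθ : 0 < θ0)
    (Q1 Q1' : ℝ → ℝ) (hderiv : ∀ x ∈ Set.Icc (0 : ℝ) 1, HasDerivAt Q1 (Q1' x) x)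
    (hanti : StrictAntiOn Q1' (Set.Icc 0 1)) :
    let F : ℝ → ℝ := fun Δ =>
      θ0 * Q1' ((bL - Δ) / (bH + bL)) - θ0 * Q1' ((bH + Δ) / (bH + bL)) + Δ
    StrictMonoOn F (Set.Icc (-bH) bL) ∧
    (F (-bH) = θ0 * (Q1' 1 - Q1' 0) - bH ∧ F (-bH) < 0) ∧
    (F bL = θ0 * (Q1' 0 - Q1' 1) + bL ∧ 0 < F bL) ∧
    (∃! Δ, Δ ∈ Set.Ioo (-bH) bL ∧ F Δ = 0) ∧
    (∀ Δ ∈ Set.Ioo (-bH) bL, F Δ = 0 →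
      (bH < bL → 0 < Δ) ∧ (bL = bH → Δ = 0) ∧ (bL < bH → Δ < 0)) := by
  change let F := critGap θ0 bH bL Q1' ; _
  intro F
  have hs : 0 < bH + bL := by linarith
  have hmono : StrictMonoOn F (Icc (-bH) bL) := strictMonoOn_critGap hs hθ.le hanti.antitoneOn
  have hjump : 0 < θ0 * (Q1' 0 - Q1' 1) :=
    mul_pos hθ (sub_pos.2 (hanti ⟨le_rfl, zero_le_one⟩ ⟨zero_le_one, le_rfl⟩ one_pos))
  have hleft : F (-bH) = θ0 * (Q1' 1 - Q1' 0) - bH := critGap_neg_left hs.ne'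
  have hright : F bL = θ0 * (Q1' 0 - Q1' 1) + bL := critGap_right hs.ne'
  have hleft_neg : F (-bH) < 0 := by rw [hleft]; linarith
  have hright_pos : 0 < F bL := by rw [hright]; linarith
  obtain ⟨c, hc, hFc⟩ := exists_mem_Ioo_critGap_eq_zero hs hderiv hleft_neg hright_pos
  have hzero : (0 : ℝ) ∈ Icc (-bH) bL := ⟨by linarith, hbL.le⟩
  refine ⟨hmono, ⟨hleft, hleft_neg⟩, ⟨hright, hright_pos⟩,
    ⟨c, ⟨hc, hFc⟩, fun y hy => hmono.injOn (Ioo_subset_Icc_self hy.1)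
      (Ioo_subset_Icc_self hc) (hy.2.trans hFc.symm)⟩, ?_⟩
  intro Δ hΔ hFΔ
  have hΔ' := Ioo_subset_Icc_self hΔ
  refine ⟨fun h => ?_, fun h => ?_, fun h => ?_⟩
  · exact (hmono.lt_iff_lt hzero hΔ').1 (hFΔ ▸ critGap_zero_neg_of_lt hbH hθ hanti h)
  · have hF0 : F 0 = 0 := by simp only [F, critGap_zero, h, sub_self, mul_zero]
    exact (hmono.eq_iff_eq hΔ' hzero).1 (hFΔ.trans hF0.symm)
  · have hF0 : 0 < F 0 := by
      have := critGap_zero_neg_of_lt hbL hθ hanti h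
      rw [critGap_swap_zero] at this
      exact neg_neg_iff_pos.1 this
    exact (hmono.lt_iff_lt hΔ' hzero).1 (hFΔ ▸ hF0)
end
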